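/- arXiv:1210.6747 — 11 statements merged into one kernel-verified Lean document; each statement's English description precedes it below -/
import Mathlib

section
/- If f : X → Y is a coarse equivalence between metric spaces X and Y, then for every n ∈ ℕ, X has asymptotic dimension at most n if and only if Y has asymptotic dimension at most n. -/
open Metric Set

/-- A subset `L` of a metric space is *large* if some `r`-neighborhood of `L` is the whole space. -/
def IsLarge {X : Type*} [MetricSpace X] (L : Set X) : Prop :=
  ∃ r > (0 : ℝ), ∀ x : X, ∃ y ∈ L, dist x y < r

/-- A subset `A` of a metric space is *small* if for every large set `L` the set `L \\ A` is large. -/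
def IsSmall {X : Type*} [MetricSpace X] (A : Set X) : Prop :=
  ∀ L : Set X, IsLarge L → IsLarge (L \ A)

/-- `AsdimLE X n` means the asymptotic dimension of `X` is at most `n`: for every `r > 0`
there are `D > 0` and a cover of `X` by sets of diameter at most `D` such that every open
`r`-ball meets at most `n + 1` members of the cover. -/
def AsdimLE (X : Type*) [MetricSpace X] (n : ℕ) : Prop :=
  ∀ r > (0 : ℝ), ∃ D > (0 : ℝ), ∃ U : Set (Set X),
    ⋃₀ U = univ ∧
    (∀ u ∈ U, EMetric.diam u ≤ ENNReal.ofReal D) ∧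
    ∀ x : X, {u ∈ U | (u ∩ Metric.ball x r).Nonempty}.Finite ∧
      {u ∈ U | (u ∩ Metric.ball x r).Nonempty}.ncard ≤ n + 1

/-- A map between metric spaces is *coarse* if it maps pairs at bounded distance to
pairs at bounded distance. -/
def IsCoarseMap {X Y : Type*} [MetricSpace X] [MetricSpace Y] (f : X → Y) : Prop :=
  ∀ R > (0 : ℝ), ∃ S > (0 : ℝ), ∀ x x' : X, dist x x' ≤ R → dist (f x) (f x') ≤ S

/-- A coarse map `f : X → Y` is a *coarse equivalence* if it has a coarse inverse up to
uniformly bounded distance. -/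
def IsCoarseEquiv {X Y : Type*} [MetricSpace X] [MetricSpace Y] (f : X → Y) : Prop :=
  IsCoarseMap f ∧ ∃ g : Y → X, IsCoarseMap g ∧
    (∃ C : ℝ, ∀ x : X, dist x (g (f x)) ≤ C) ∧
    (∃ C : ℝ, ∀ y : Y, dist y (f (g y)) ≤ C)

/-!
Covers pull back along a coarse map `f` that is effectively proper, as is any map with a coarse
left inverse up to bounded distance. If `S` bounds the image under `f` of `r`-close pairs and `V` is
a uniformly bounded cover of `Y` whose `(S + 1)`-balls meet at most `n + 1` members, then the
preimages of `V` are uniformly bounded by effective properness, and an `r`-ball around `x` meets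
`f ⁻¹' v` only if the `(S + 1)`-ball around `f x` meets `v`. Both `f` and its coarse inverse are
such maps, which gives the two implications.
-/

section CoarseEmbedding

variable {X Y : Type*} [MetricSpace X] [MetricSpace Y]

def IsEffectivelyProper (f : X → Y) : Prop :=
  ∀ D > (0 : ℝ), ∃ T : ℝ, ∀ a b : X, dist (f a) (f b) ≤ D → dist a b ≤ T

lemma IsCoarseMap.isEffectivelyProper_of_leftInverse {f : X → Y} {g : Y → X}
    (hg : IsCoarseMap g) {C : ℝ} (hC : ∀ x, dist x (g (f x)) ≤ C) : IsEffectivelyProper f := by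
  intro D hD
  obtain ⟨S, -, hS⟩ := hg D hD
  refine ⟨C + S + C, fun a b hab => ?_⟩
  calc dist a b ≤ dist a (g (f a)) + dist (g (f a)) (g (f b)) + dist (g (f b)) b :=
        dist_triangle4 _ _ _ _
    _ ≤ C + S + C := by
        gcongr
        · exact hC a
        · exact hS _ _ hab
        · rw [dist_comm]; exact hC b

lemma IsEffectivelyProper.ediam_preimage_le {f : X → Y} (hf : IsEffectivelyProper f)
    {D : ℝ} (hD : 0 < D) : ∃ T > (0 : ℝ), ∀ v : Set Y, ediam v ≤ ENNReal.ofReal D →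
      ediam (f ⁻¹' v) ≤ ENNReal.ofReal T := by
  obtain ⟨T, hT⟩ := hf D hD
  refine ⟨max T 1, by positivity, fun v hv => ediam_le_of_forall_dist_le fun a ha b hb => ?_⟩
  have hab : dist (f a) (f b) ≤ D := (edist_le_ofReal hD.le).1 (edist_le_of_ediam_le ha hb hv)
  exact (hT a b hab).trans (le_max_left _ _)

lemma preimage_meeting_ball_subset {f : X → Y} {r S : ℝ}
    (hS : ∀ x x' : X, dist x x' ≤ r → dist (f x) (f x') ≤ S) (V : Set (Set Y)) (x : X) :
    {u ∈ preimage f '' V | (u ∩ ball x r).Nonempty} ⊆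
      preimage f '' {v ∈ V | (v ∩ ball (f x) (S + 1)).Nonempty} := by
  rintro _ ⟨⟨v, hv, rfl⟩, x', hx'v, hx'r⟩
  have hfx' : dist (f x') (f x) ≤ S := hS _ _ (mem_ball.1 hx'r).le
  exact ⟨v, ⟨hv, f x', hx'v, mem_ball.2 (by linarith)⟩, rfl⟩

lemma AsdimLE.of_isCoarseMap_of_isEffectivelyProper {f : X → Y} (hf : IsCoarseMap f)
    (hf' : IsEffectivelyProper f) {n : ℕ} (h : AsdimLE Y n) : AsdimLE X n := by
  intro r hr
  obtain ⟨S, hSpos, hS⟩ := hf r hr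
  obtain ⟨D, hD, V, hVcover, hVdiam, hVmult⟩ := h (S + 1) (by positivity)
  obtain ⟨T, hT, hTdiam⟩ := hf'.ediam_preimage_le hD
  refine ⟨T, hT, preimage f '' V, by rw [sUnion_image, ← preimage_sUnion, hVcover, preimage_univ],
    ?_, fun x => ?_⟩
  · rintro _ ⟨v, hv, rfl⟩
    exact hTdiam v (hVdiam v hv)
  · obtain ⟨hfin, hcard⟩ := hVmult (f x)
    have hsub := preimage_meeting_ball_subset hS V x
    exact ⟨(hfin.image _).subset hsub,
      (ncard_le_ncard hsub (hfin.image _)).trans ((ncard_image_le hfin).trans hcard)⟩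

end CoarseEmbedding

theorem asdim_invariant_of_coarseEquiv {X Y : Type*} [MetricSpace X] [MetricSpace Y]
    (f : X → Y) (hf : IsCoarseEquiv f) (n : ℕ) :
    AsdimLE X n ↔ AsdimLE Y n := by
  obtain ⟨hf, g, hg, ⟨C, hgf⟩, ⟨C', hfg⟩⟩ := hf
  exact ⟨AsdimLE.of_isCoarseMap_of_isEffectivelyProper hg
      (hf.isEffectivelyProper_of_leftInverse hfg),
    AsdimLE.of_isCoarseMap_of_isEffectivelyProper hf (hg.isEffectivelyProper_of_leftInverse hgf)⟩
end

section
/- Let X and Y be coarsely equivalent metric spaces. Then the following are equivalent: (a) for every subset A ⊆ X, A is small if and only if there exists n ∈ ℕ with asdim(A) ≤ n and not asdim(X) ≤ n; (b) for every subset B ⊆ Y, B is small if and only if there exists n ∈ ℕ with asdim(B) ≤ n and not asdim(Y) ≤ n. -/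
/-!
Smallness and asymptotic dimension are both invariant under coarse equivalence, so the
characterisation transfers. Let `g` be a coarse inverse of `f`. Then `f` maps large sets to large
sets and `g (f A)` lies in a bounded thickening of `A`, which is small whenever `A` is; hence `A`
is small iff `f A` is. A coarse embedding pulls uniformly bounded covers of bounded multiplicity
back to such covers, and `f` restricts to a coarse embedding `A → f A` whose sections are again
coarse embeddings; so `asdim A = asdim (f A)` and `asdim X = asdim Y`.
-/

open Metric Set

section

variable {X Y : Type*} [MetricSpace X] [MetricSpace Y]

structure IsCoarseEmbedding (f : X → Y) : Prop where
  isCoarseMap : IsCoarseMap f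
  effectivelyProper :
    ∀ R > (0 : ℝ), ∃ S > (0 : ℝ), ∀ x x' : X, dist (f x) (f x') ≤ R → dist x x' ≤ S

structure IsCoarseInverse (f : X → Y) (g : Y → X) : Prop where
  isCoarseMap_left : IsCoarseMap f
  isCoarseMap_right : IsCoarseMap g
  dist_left_comp_le : ∃ C > (0 : ℝ), ∀ x : X, dist x (g (f x)) ≤ C
  dist_right_comp_le : ∃ C > (0 : ℝ), ∀ y : Y, dist y (f (g y)) ≤ C

def SmallIffAsdimLt (X : Type*) [MetricSpace X] : Prop :=
  ∀ A : Set X, IsSmall A ↔ ∃ n : ℕ, AsdimLE ↥A n ∧ ¬ AsdimLE X n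

lemma IsCoarseEquiv.exists_isCoarseInverse {f : X → Y} (hf : IsCoarseEquiv f) :
    ∃ g : Y → X, IsCoarseInverse f g := by
  obtain ⟨hfc, g, hgc, ⟨C, hC⟩, ⟨C', hC'⟩⟩ := hf
  exact ⟨g, hfc, hgc, ⟨max C 1, by positivity, fun x => (hC x).trans (le_max_left _ _)⟩,
    ⟨max C' 1, by positivity, fun y => (hC' y).trans (le_max_left _ _)⟩⟩

namespace IsCoarseInverse

variable {f : X → Y} {g : Y → X}

lemma symm (h : IsCoarseInverse f g) : IsCoarseInverse g f :=
  ⟨h.isCoarseMap_right, h.isCoarseMap_left, h.dist_right_comp_le, h.dist_left_comp_le⟩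

lemma isCoarseEmbedding (h : IsCoarseInverse f g) : IsCoarseEmbedding f := by
  refine ⟨h.isCoarseMap_left, fun R hR => ?_⟩
  obtain ⟨S, hS, hgS⟩ := h.isCoarseMap_right R hR
  obtain ⟨C, hC, hgf⟩ := h.dist_left_comp_le
  refine ⟨C + S + C, by positivity, fun x x' hxx' => ?_⟩
  calc dist x x' ≤ dist x (g (f x)) + dist (g (f x)) (g (f x')) + dist (g (f x')) x' :=
        dist_triangle4 _ _ _ _
    _ ≤ C + S + C := by
        gcongr
        · exact hgf x
        · exact hgS _ _ hxx'
        · exact dist_comm x' _ ▸ hgf x'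

end IsCoarseInverse

namespace IsCoarseEmbedding

variable {f : X → Y}

lemma imageFactorization (hf : IsCoarseEmbedding f) (A : Set X) :
    IsCoarseEmbedding (A.imageFactorization f) :=
  ⟨fun R hR => (hf.isCoarseMap R hR).imp fun _ ⟨hS, h⟩ => ⟨hS, fun a a' => h a a'⟩,
    fun R hR => (hf.effectivelyProper R hR).imp fun _ ⟨hS, h⟩ => ⟨hS, fun a a' => h a a'⟩⟩

lemma of_rightInverse (hf : IsCoarseEmbedding f) {s : Y → X} (hs : Function.RightInverse s f) :
    IsCoarseEmbedding s := by
  refine ⟨fun R hR => ?_, fun R hR => ?_⟩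
  · obtain ⟨S, hS, h⟩ := hf.effectivelyProper R hR
    exact ⟨S, hS, fun y y' hyy' => h _ _ (by rwa [hs y, hs y'])⟩
  · obtain ⟨S, hS, h⟩ := hf.isCoarseMap R hR
    exact ⟨S, hS, fun y y' hyy' => hs y ▸ hs y' ▸ h _ _ hyy'⟩

/-- Pull back a cover of `Y` along `f`: lower control bounds the diameters, and `f` maps
`r`-balls into balls of a fixed radius, so no point sees more pieces than before. -/
lemma asdimLE (hf : IsCoarseEmbedding f) {n : ℕ} (hY : AsdimLE Y n) : AsdimLE X n := by
  intro r hr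
  obtain ⟨R, hR, hfR⟩ := hf.isCoarseMap r hr
  obtain ⟨D, hD, U, hcover, hdiam, hmult⟩ := hY (R + 1) (by positivity)
  obtain ⟨S, hS, hfS⟩ := hf.effectivelyProper D hD
  refine ⟨S, hS, preimage f '' U, ?_, ?_, fun x => ?_⟩
  · rw [sUnion_image, ← preimage_iUnion₂, ← sUnion_eq_biUnion, hcover, preimage_univ]
  · rintro _ ⟨u, hu, rfl⟩
    refine Metric.ediam_le_of_forall_dist_le fun x hx x' hx' => hfS _ _ ?_
    exact (edist_le_ofReal hD.le).1
      ((Metric.edist_le_ediam_of_mem (s := u) hx hx').trans (hdiam u hu))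
  · have hsub : {v ∈ preimage f '' U | (v ∩ ball x r).Nonempty} ⊆
        preimage f '' {u ∈ U | (u ∩ ball (f x) (R + 1)).Nonempty} := by
      rintro _ ⟨⟨u, hu, rfl⟩, z, hzu, hzx⟩
      refine ⟨u, ⟨hu, f z, hzu, ?_⟩, rfl⟩
      exact mem_ball.2 ((hfR _ _ (mem_ball.1 hzx).le).trans_lt (lt_add_one R))
    obtain ⟨hfin, hcard⟩ := hmult (f x)
    exact ⟨(hfin.image _).subset hsub,
      (ncard_le_ncard hsub (hfin.image _)).trans ((ncard_image_le hfin).trans hcard)⟩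

lemma asdimLE_image_iff (hf : IsCoarseEmbedding f) (A : Set X) {n : ℕ} :
    AsdimLE ↥(f '' A) n ↔ AsdimLE ↥A n :=
  ⟨(hf.imageFactorization A).asdimLE,
    ((hf.imageFactorization A).of_rightInverse
      (Function.rightInverse_surjInv imageFactorization_surjective)).asdimLE⟩

end IsCoarseEmbedding

lemma IsLarge.mono {L M : Set X} (hL : IsLarge L) (hLM : L ⊆ M) : IsLarge M :=
  let ⟨r, hr, h⟩ := hL
  ⟨r, hr, fun x => (h x).imp fun _ ⟨hy, hd⟩ => ⟨hLM hy, hd⟩⟩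

lemma IsSmall.mono {A B : Set X} (hB : IsSmall B) (hAB : A ⊆ B) : IsSmall A :=
  fun L hL => (hB L hL).mono (sdiff_subset_sdiff_right hAB)

/-- Replacing the part of `L` near `A` by `A` itself keeps `L` large; removing `A` from the
result leaves a subset of `L \ thickening δ A`. -/
lemma IsSmall.thickening {A : Set X} (hA : IsSmall A) (δ : ℝ) :
    IsSmall (thickening δ A) := by
  intro L ⟨s, hs, hL⟩
  have hM : IsLarge (L \ Metric.thickening δ A ∪ A) := by
    refine ⟨s + max δ 0, by positivity, fun x => ?_⟩
    obtain ⟨l, hl, hxl⟩ := hL x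
    by_cases hlA : l ∈ Metric.thickening δ A
    · obtain ⟨a, ha, hla⟩ := mem_thickening_iff.1 hlA
      refine ⟨a, Or.inr ha, ?_⟩
      calc dist x a ≤ dist x l + dist l a := dist_triangle _ _ _
        _ < s + max δ 0 := add_lt_add_of_lt_of_le hxl (hla.le.trans (le_max_left _ _))
    · exact ⟨l, Or.inl ⟨hl, hlA⟩, hxl.trans_le (le_add_of_nonneg_right (le_max_right _ _))⟩
  refine (hA _ hM).mono ?_
  rintro x ⟨hx | hx, hxA⟩
  exacts [hx, absurd hx hxA]

namespace IsCoarseInverse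

variable {f : X → Y} {g : Y → X}

lemma asdimLE_iff (h : IsCoarseInverse f g) {n : ℕ} : AsdimLE X n ↔ AsdimLE Y n :=
  ⟨h.symm.isCoarseEmbedding.asdimLE, h.isCoarseEmbedding.asdimLE⟩

lemma isLarge_image (h : IsCoarseInverse f g) {L : Set X} (hL : IsLarge L) :
    IsLarge (f '' L) := by
  obtain ⟨r, hr, hLr⟩ := hL
  obtain ⟨S, hS, hfS⟩ := h.isCoarseMap_left r hr
  obtain ⟨C, hC, hfg⟩ := h.dist_right_comp_le
  refine ⟨C + S + 1, by positivity, fun y => ?_⟩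
  obtain ⟨l, hl, hgl⟩ := hLr (g y)
  refine ⟨f l, mem_image_of_mem f hl, ?_⟩
  calc dist y (f l) ≤ dist y (f (g y)) + dist (f (g y)) (f l) := dist_triangle _ _ _
    _ ≤ C + S := add_le_add (hfg y) (hfS _ _ hgl.le)
    _ < C + S + 1 := lt_add_one _

lemma isSmall_of_image (h : IsCoarseInverse f g) {A : Set X} (hA : IsSmall (f '' A)) :
    IsSmall A := by
  intro L hL
  obtain ⟨r, hr, hLr⟩ := hA _ (h.isLarge_image hL)
  obtain ⟨S, hS, hgS⟩ := h.isCoarseMap_right r hr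
  obtain ⟨C, hC, hgf⟩ := h.dist_left_comp_le
  refine ⟨C + S + C + 1, by positivity, fun x => ?_⟩
  obtain ⟨_, ⟨⟨l, hl, rfl⟩, hlA⟩, hxl⟩ := hLr (f x)
  refine ⟨l, ⟨hl, fun hl => hlA (mem_image_of_mem f hl)⟩, ?_⟩
  calc dist x l ≤ dist x (g (f x)) + dist (g (f x)) (g (f l)) + dist (g (f l)) l :=
        dist_triangle4 _ _ _ _
    _ ≤ C + S + C := by
        gcongr
        · exact hgf x
        · exact hgS _ _ hxl.le
        · exact dist_comm l _ ▸ hgf l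
    _ < C + S + C + 1 := lt_add_one _

lemma isSmall_image_iff (h : IsCoarseInverse f g) {A : Set X} : IsSmall (f '' A) ↔ IsSmall A := by
  refine ⟨h.isSmall_of_image, fun hA => h.symm.isSmall_of_image ?_⟩
  obtain ⟨C, hC, hgf⟩ := h.dist_left_comp_le
  refine (hA.thickening (C + 1)).mono ?_
  rintro _ ⟨_, ⟨a, ha, rfl⟩, rfl⟩
  exact mem_thickening_iff.2 ⟨a, ha, (dist_comm a _ ▸ hgf a).trans_lt (lt_add_one C)⟩

lemma smallIffAsdimLt (h : IsCoarseInverse f g) (hY : SmallIffAsdimLt Y) : SmallIffAsdimLt X := by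
  intro A
  rw [← h.isSmall_image_iff, hY (f '' A)]
  exact exists_congr fun n => and_congr (h.isCoarseEmbedding.asdimLE_image_iff A)
    (not_congr h.asdimLE_iff.symm)

end IsCoarseInverse

end

theorem small_eq_asdim_lt_invariant_of_coarseEquiv {X Y : Type*} [MetricSpace X] [MetricSpace Y]
    (f : X → Y) (hf : IsCoarseEquiv f) :
    (∀ A : Set X, IsSmall A ↔ ∃ n : ℕ, AsdimLE ↥A n ∧ ¬ AsdimLE X n) ↔
      (∀ B : Set Y, IsSmall B ↔ ∃ n : ℕ, AsdimLE ↥B n ∧ ¬ AsdimLE Y n) := by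
  obtain ⟨g, hfg⟩ := hf.exists_isCoarseInverse
  exact ⟨hfg.symm.smallIffAsdimLt, hfg.smallIffAsdimLt⟩
end

section
/- Let G be a group equipped with a proper left-invariant metric. If a subset A ⊆ G satisfies asdim(A) < asdim(G) (i.e. there exists n ∈ ℕ with asdim(A) ≤ n and not asdim(G) ≤ n), then A is small in G. -/
open Metric Set

/-!
Suppose `L` is large, witnessed by the constant `c`, but `L \ A` is not large. Then the
`c`-thickening of `A` contains balls of every radius. A uniformly bounded cover of `A` of small
multiplicity pushes forward to one of its thickening, and by left-invariance these translate to
covers of the balls `B(1, R)` with bounds independent of `R`. A limit of these covers along an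
ultrafilter on `R` covers all of `G`, so `asdim G ≤ asdim A`, a contradiction.
-/

open Filter

structure IsAsdimCover {X : Type*} [MetricSpace X] (s : Set X) (U : Set (Set X)) (D r : ℝ)
    (n : ℕ) : Prop where
  subset_sUnion : s ⊆ ⋃₀ U
  ediam_le : ∀ u ∈ U, ediam u ≤ ENNReal.ofReal D
  encard_meeting_le : ∀ x, {u ∈ U | (u ∩ ball x r).Nonempty}.encard ≤ n + 1

def AsdimLEOn {X : Type*} [MetricSpace X] (s : Set X) (n : ℕ) : Prop :=
  ∀ r > (0 : ℝ), ∃ D > (0 : ℝ), ∃ U : Set (Set X), IsAsdimCover s U D r n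

section

variable {X Y : Type*} [MetricSpace X] [MetricSpace Y] {s t : Set X} {U : Set (Set X)}
  {D r : ℝ} {n : ℕ}

theorem asdimLE_iff_asdimLEOn_univ : AsdimLE X n ↔ AsdimLEOn (univ : Set X) n := by
  refine forall₂_congr fun r _ => exists_congr fun D => and_congr_right fun _ =>
    exists_congr fun U => ?_
  have hcard (S : Set (Set X)) : S.encard ≤ n + 1 ↔ S.Finite ∧ S.ncard ≤ n + 1 := by
    exact_mod_cast encard_le_coe_iff_finite_ncard_le
  exact ⟨fun ⟨h₁, h₂, h₃⟩ => ⟨h₁.ge, h₂, fun x => (hcard _).2 (h₃ x)⟩,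
    fun ⟨h₁, h₂, h₃⟩ => ⟨univ_subset_iff.1 h₁, h₂, fun x => (hcard _).1 (h₃ x)⟩⟩

theorem IsAsdimCover.mono (hU : IsAsdimCover s U D r n) (hts : t ⊆ s) :
    IsAsdimCover t U D r n :=
  ⟨hts.trans hU.subset_sUnion, hU.ediam_le, hU.encard_meeting_le⟩

theorem IsAsdimCover.image (hU : IsAsdimCover s U D r n) (e : X ≃ᵢ Y) :
    IsAsdimCover (e '' s) (Set.image e '' U) D r n where
  subset_sUnion := by
    rintro _ ⟨x, hx, rfl⟩
    obtain ⟨u, hu, hxu⟩ := hU.subset_sUnion hx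
    exact ⟨e '' u, mem_image_of_mem _ hu, mem_image_of_mem _ hxu⟩
  ediam_le := by
    rintro _ ⟨u, hu, rfl⟩
    rw [e.ediam_image]
    exact hU.ediam_le u hu
  encard_meeting_le y := by
    have hsub : {v ∈ Set.image e '' U | (v ∩ ball y r).Nonempty} ⊆
        Set.image e '' {u ∈ U | (u ∩ ball (e.symm y) r).Nonempty} := by
      rintro _ ⟨⟨u, hu, rfl⟩, _, ⟨x, hxu, rfl⟩, hx⟩
      refine ⟨u, ⟨hu, x, hxu, ?_⟩, rfl⟩
      rwa [← e.preimage_ball]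
    exact (encard_le_encard hsub).trans
      ((encard_image_le _ _).trans (hU.encard_meeting_le _))

end

section

variable {X : Type*} [MetricSpace X] {D r c : ℝ} {n : ℕ}

theorem IsAsdimCover.exists_thickening {A : Set X} {U : Set (Set A)} (hD : 0 ≤ D)
    (hU : IsAsdimCover univ U D (2 * r + 2 * c) n) :
    ∃ V : Set (Set X), IsAsdimCover (thickening c A) V (D + 2 * c) r n := by
  have hnear (x : thickening c A) : ∃ a : A, dist (x : X) a < c := by
    obtain ⟨a, ha, hxa⟩ := mem_thickening_iff.1 x.2
    exact ⟨⟨a, ha⟩, hxa⟩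
  choose q hq using hnear
  have hdist {x y : thickening c A} {u : Set A} (hu : u ∈ U) (hx : q x ∈ u) (hy : q y ∈ u) :
      dist (x : X) y ≤ D + 2 * c := by
    have hxy : dist (q x) (q y) ≤ D :=
      (edist_le_ofReal hD).1 ((edist_le_ediam_of_mem hx hy).trans (hU.ediam_le u hu))
    rw [Subtype.dist_eq] at hxy
    have := dist_triangle4 (x : X) (q x) (q y) y
    have : dist (q y : X) y < c := by rw [dist_comm]; exact hq y
    linarith [hq x]
  let V (u : Set A) : Set X := Subtype.val '' (q ⁻¹' u)
  refine ⟨V '' U, ⟨?_, ?_, fun x => ?_⟩⟩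
  · intro x hx
    obtain ⟨u, hu, hxu⟩ := hU.subset_sUnion (mem_univ (q ⟨x, hx⟩))
    exact ⟨_, mem_image_of_mem _ hu, ⟨x, hx⟩, hxu, rfl⟩
  · rintro _ ⟨u, hu, rfl⟩
    refine Metric.ediam_le ?_
    rintro _ ⟨y, hy, rfl⟩ _ ⟨z, hz, rfl⟩
    rw [edist_dist]
    exact ENNReal.ofReal_le_ofReal (hdist hu hy hz)
  rcases eq_empty_or_nonempty {v ∈ V '' U | (v ∩ ball x r).Nonempty} with
    hempty | ⟨_, ⟨-, -, rfl⟩, _, ⟨y₀, -, rfl⟩, hy₀⟩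
  · rw [hempty, encard_empty]
    exact zero_le
  refine (encard_le_encard ?_).trans ((encard_image_le V _).trans (hU.encard_meeting_le (q y₀)))
  rintro _ ⟨⟨u, hu, rfl⟩, _, ⟨y, hyu, rfl⟩, hy⟩
  refine ⟨u, ⟨hu, q y, hyu, ?_⟩, rfl⟩
  rw [mem_ball, Subtype.dist_eq]
  rw [mem_ball] at hy hy₀
  have h₁ := dist_triangle4 (q y : X) y x y₀
  have h₂ := dist_triangle (q y : X) y₀ (q y₀)
  have h₃ : dist (q y : X) y < c := by rw [dist_comm]; exact hq y
  have h₄ : dist x y₀ < r := by rw [dist_comm]; exact hy₀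
  linarith [hq y₀]

theorem AsdimLE.asdimLEOn_thickening {A : Set X} (hA : AsdimLE A n) (hc : 0 ≤ c) :
    AsdimLEOn (thickening c A) n := by
  intro r hr
  obtain ⟨D, hD, U, hU⟩ := asdimLE_iff_asdimLEOn_univ.1 hA (2 * r + 2 * c) (by positivity)
  obtain ⟨V, hV⟩ := hU.exists_thickening hD.le
  exact ⟨D + 2 * c, by positivity, V, hV⟩

end

theorem Ultrafilter.mem_limsup_iff {ι X : Type*} {𝒰 : Ultrafilter ι} {f : ι → Set X} {x : X} :
    x ∈ limsup f 𝒰 ↔ ∀ᶠ i in 𝒰, x ∈ f i :=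
  mem_limsup_iff_frequently_mem.trans Ultrafilter.frequently_iff_eventually

theorem Ultrafilter.eventually_ne_of_limsup_ne {ι α : Type*} [CompleteLattice α]
    {𝒰 : Ultrafilter ι} {f g : ι → α} (h : limsup f 𝒰 ≠ limsup g 𝒰) :
    ∀ᶠ i in 𝒰, f i ≠ g i :=
  Ultrafilter.eventually_not.2 fun heq => h (limsup_congr heq)

section LimitCover

variable {ι X : Type*} (𝒰 : Ultrafilter ι) (W : ι → Set (Set X))

/-- Choice functions may pick `∅`, so that a point lying in `⋃₀ W i` only for `𝒰`-almost all `i`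
still lies in some limit. -/
def limitCover : Set (Set X) :=
  (fun f : ι → Set X => limsup f 𝒰) '' {f | ∀ i, f i ∈ insert ∅ (W i)}

variable {𝒰 W}

theorem sUnion_limitCover (h : ∀ x, ∀ᶠ i in 𝒰, x ∈ ⋃₀ W i) : ⋃₀ limitCover 𝒰 W = univ := by
  refine eq_univ_of_forall fun x => ?_
  have hpick (i : ι) : ∃ w ∈ insert ∅ (W i), x ∈ ⋃₀ W i → x ∈ w := by
    by_cases hx : x ∈ ⋃₀ W i
    · obtain ⟨w, hw, hxw⟩ := hx
      exact ⟨w, mem_insert_of_mem _ hw, fun _ => hxw⟩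
    · exact ⟨∅, mem_insert _ _, fun h => absurd h hx⟩
  choose f hfW hxf using hpick
  exact ⟨_, mem_image_of_mem _ hfW, Ultrafilter.mem_limsup_iff.2 ((h x).mono hxf)⟩

theorem ediam_le_of_mem_limitCover [PseudoEMetricSpace X] {d : ENNReal}
    (h : ∀ i, ∀ w ∈ W i, ediam w ≤ d) {u : Set X} (hu : u ∈ limitCover 𝒰 W) : ediam u ≤ d := by
  obtain ⟨f, hfW, rfl⟩ := hu
  refine Metric.ediam_le fun y hy z hz => ?_
  obtain ⟨i, hyi, hzi⟩ := ((Ultrafilter.mem_limsup_iff.1 hy).and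
    (Ultrafilter.mem_limsup_iff.1 hz)).exists
  rcases mem_insert_iff.1 (hfW i) with hempty | hW
  · exact absurd (hempty ▸ hyi) (notMem_empty y)
  · exact (edist_le_ediam_of_mem hyi hzi).trans (h i _ hW)

theorem encard_limitCover_meeting_le (B : Set X) {m : ℕ}
    (h : ∀ i, {w ∈ W i | (w ∩ B).Nonempty}.encard ≤ m) :
    {u ∈ limitCover 𝒰 W | (u ∩ B).Nonempty}.encard ≤ m := by
  by_contra! hlarge
  obtain ⟨t, hts, htcard⟩ := exists_subset_encard_eq (Order.add_one_le_of_lt hlarge)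
  have htfin : t.Finite := finite_of_encard_eq_coe (k := m + 1) (by exact_mod_cast htcard)
  have : Finite t := htfin.to_subtype
  choose F hFW hFt using fun u : t => (hts u.2).1
  beta_reduce at hFt
  choose y hyt hyB using fun u : t => (hts u.2).2
  -- finitely many distinct limits, each meeting `B`, are already distinct and meet `B` at one index
  have hev : ∀ᶠ i in 𝒰, (∀ u : t, y u ∈ F u i) ∧ ∀ p : t × t, p.1 ≠ p.2 → F p.1 i ≠ F p.2 i := by
    refine (eventually_all.2 fun u => ?_).and (eventually_all.2 fun p => ?_)
    · exact Ultrafilter.mem_limsup_iff.1 ((hFt u).symm ▸ hyt u)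
    · by_cases hp : p.1 = p.2
      · exact Eventually.of_forall fun _ h => absurd hp h
      · refine (Ultrafilter.eventually_ne_of_limsup_ne ?_).mono fun _ h _ => h
        rw [hFt, hFt]
        exact fun heq => hp (Subtype.ext heq)
  obtain ⟨i, hyF, hFinj⟩ := hev.exists
  have hmem (u : t) : F u i ∈ {w ∈ W i | (w ∩ B).Nonempty} := by
    rcases mem_insert_iff.1 (hFW u i) with hempty | hW
    · exact absurd (hempty ▸ hyF u) (notMem_empty _)
    · exact ⟨hW, y u, hyF u, hyB u⟩
  let e : t ↪ {w ∈ W i | (w ∩ B).Nonempty} :=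
    ⟨fun u => ⟨F u i, hmem u⟩, fun u v huv => by
      by_contra hne
      exact hFinj (u, v) hne (congrArg Subtype.val huv)⟩
  have := e.encard_le.trans (h i)
  rw [htcard] at this
  exact absurd this (by norm_cast; omega)

end LimitCover

section

variable {X : Type*} [MetricSpace X] {n : ℕ}

theorem asdimLE_of_forall_ball_covers (e : X)
    (h : ∀ r > (0 : ℝ), ∃ D > (0 : ℝ), ∀ R : ℕ, ∃ U, IsAsdimCover (ball e R) U D r n) :
    AsdimLE X n := by
  refine asdimLE_iff_asdimLEOn_univ.2 fun r hr => ?_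
  obtain ⟨D, hD, hcov⟩ := h r hr
  choose W hW using hcov
  let 𝒰 := Ultrafilter.of (atTop : Filter ℕ)
  refine ⟨D, hD, limitCover 𝒰 W, ⟨?_, fun u => ediam_le_of_mem_limitCover fun R => (hW R).ediam_le,
    fun x => ?_⟩⟩
  · rw [sUnion_limitCover fun x => Ultrafilter.of_le _ ?_]
    exact (tendsto_natCast_atTop_atTop.eventually_gt_atTop (dist x e)).mono fun R hR =>
      (hW R).subset_sUnion (mem_ball.2 hR)
  · exact_mod_cast encard_limitCover_meeting_le (m := n + 1) (ball x r) fun R => by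
      exact_mod_cast (hW R).encard_meeting_le x

theorem exists_ball_subset_thickening_of_not_isLarge_diff {L A : Set X} {c : ℝ}
    (hL : ∀ x, ∃ y ∈ L, dist x y < c) (hLA : ¬IsLarge (L \ A)) (R : ℝ) :
    ∃ x, ball x R ⊆ thickening c A := by
  unfold IsLarge at hLA
  push Not at hLA
  obtain ⟨x, hx⟩ := hLA (max (R + c) 1) (by positivity)
  refine ⟨x, fun g hg => ?_⟩
  obtain ⟨y, hyL, hgy⟩ := hL g
  have hyA : y ∈ A := by
    by_contra hyA
    have := hx y ⟨hyL, hyA⟩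
    have := dist_triangle x g y
    rw [mem_ball, dist_comm] at hg
    linarith [le_max_left (R + c) 1]
  exact mem_thickening_iff.2 ⟨y, hyA, hgy⟩

end

theorem asdimLE_of_asdimLEOn_of_forall_ball_subset {G : Type*} [Group G] [MetricSpace G]
    [IsIsometricSMul G G] {s : Set G} {n : ℕ} (hs : AsdimLEOn s n)
    (hball : ∀ R : ℝ, ∃ x, ball x R ⊆ s) : AsdimLE G n := by
  refine asdimLE_of_forall_ball_covers 1 fun r hr => ?_
  obtain ⟨D, hD, V, hV⟩ := hs r hr
  refine ⟨D, hD, fun R => ?_⟩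
  obtain ⟨x, hx⟩ := hball R
  let e := IsometryEquiv.constSMul (X := G) x⁻¹
  refine ⟨_, (hV.image e).mono ?_⟩
  calc ball 1 (R : ℝ) = e '' ball x R := by
        rw [e.image_ball, IsometryEquiv.constSMul_apply, smul_eq_mul, inv_mul_cancel]
    _ ⊆ e '' s := image_mono hx

theorem small_of_asdim_lt_in_group_general (G : Type*) [Group G] [MetricSpace G]
    (hinv : ∀ z x y : G, dist (z * x) (z * y) = dist x y)
    (A : Set G) (h : ∃ n : ℕ, AsdimLE ↥A n ∧ ¬ AsdimLE G n) :
    IsSmall A := by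
  obtain ⟨n, hA, hG⟩ := h
  have : IsIsometricSMul G G := ⟨fun z => Isometry.of_dist_eq (hinv z)⟩
  rintro L ⟨c, hc, hLc⟩
  by_contra hLA
  exact hG (asdimLE_of_asdimLEOn_of_forall_ball_subset (hA.asdimLEOn_thickening hc.le)
    (exists_ball_subset_thickening_of_not_isLarge_diff hLc hLA))

theorem small_of_asdim_lt_in_group (G : Type*) [Group G] [MetricSpace G]
    (hinv : ∀ z x y : G, dist (z * x) (z * y) = dist x y)
    (hproper : ∀ (x : G) (R : ℝ), IsCompact (Metric.closedBall x R))
    (A : Set G) (h : ∃ n : ℕ, AsdimLE ↥A n ∧ ¬ AsdimLE G n) :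
    IsSmall A :=
  small_of_asdim_lt_in_group_general G hinv A h
end

section
/- Let X be a metric space and n ∈ ℕ. Then asdim_col(X) ≤ n if and only if for every r > 0 there exist D > 0 and a coloring χ : X → Fin (n+1) such that every χ-monochrome r-chain C ⊆ X has diameter at most D. -/
open Metric Set

/-- A list of points is an `r`-chain if consecutive points are at distance at most `r`. -/
def IsRChain {X : Type*} [MetricSpace X] (r : ℝ) (l : List X) : Prop :=
  l.Chain' (fun a b => dist a b ≤ r)

/-- A list of points is monochrome with respect to a coloring `χ` if `χ` is constant on it. -/
def Monochrome {X : Type*} {n : ℕ} (χ : X → Fin (n + 1)) (l : List X) : Prop :=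
  ∀ x ∈ l, ∀ y ∈ l, χ x = χ y

/-- `AsdimColLE X n` means the *colored* asymptotic dimension of `X` is at most `n`:
for every `r > 0` there are `D > 0` and a cover of `X` by sets of diameter at most `D`
which splits into `n + 1` many `r`-disjoint subfamilies. -/
def AsdimColLE (X : Type*) [MetricSpace X] (n : ℕ) : Prop :=
  ∀ r > (0 : ℝ), ∃ D > (0 : ℝ), ∃ U : Fin (n + 1) → Set (Set X),
    (∀ x : X, ∃ i : Fin (n + 1), ∃ u ∈ U i, x ∈ u) ∧
    (∀ i : Fin (n + 1), ∀ u ∈ U i, ∀ v ∈ U i, u ≠ v → ∀ x ∈ u, ∀ y ∈ v, r < dist x y) ∧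
    (∀ i : Fin (n + 1), ∀ u ∈ U i, EMetric.diam u ≤ ENNReal.ofReal D)

/-! Color each point by the index of a cover member containing it: by `r`-disjointness a
monochrome step (two points of one color at distance `≤ r`) never leaves that member, so a
monochrome `r`-chain lies in a single member. Conversely, the equivalence classes generated by
monochrome steps, grouped by color, form an `r`-disjoint cover, and any two points of a class
are joined by a monochrome `r`-chain. -/

open Relation

theorem List.IsChain.apply_eq_apply {α β : Type*} {R : α → α → Prop} {f : α → β}
    (hf : ∀ a b, R a b → f a = f b) {l : List α} (hl : l.IsChain R) {a b : α}
    (ha : a ∈ l) (hb : b ∈ l) : f a = f b := by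
  have := hl.induction (fun x ↦ f x = f (l.head (l.ne_nil_of_mem ha))) l
    (fun x y hxy hx ↦ (hf x y hxy).symm.trans hx) fun _ ↦ rfl
  exact (this a ha).trans (this b hb).symm

section Coloring

variable {X : Type*} [MetricSpace X] {n : ℕ}

def MonochromeStep (r : ℝ) (χ : X → Fin (n + 1)) (a b : X) : Prop :=
  dist a b ≤ r ∧ χ a = χ b

instance (r : ℝ) (χ : X → Fin (n + 1)) : Std.Symm (MonochromeStep r χ) where
  symm _ _ h := ⟨dist_comm (α := X) .. ▸ h.1, h.2.symm⟩

theorem isChain_monochromeStep_iff {r : ℝ} {χ : X → Fin (n + 1)} {l : List X} :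
    l.IsChain (MonochromeStep r χ) ↔ IsRChain r l ∧ Monochrome χ l :=
  ⟨fun hl ↦ ⟨hl.imp fun _ _ h ↦ h.1, fun _ hx _ hy ↦ hl.apply_eq_apply (fun _ _ h ↦ h.2) hx hy⟩,
    fun ⟨hr, hm⟩ ↦ hr.imp_of_mem_imp fun a b ha hb hab ↦ ⟨hab, hm a ha b hb⟩⟩

theorem exists_monochrome_rChain_of_reflTransGen {r : ℝ} {χ : X → Fin (n + 1)} {a b : X}
    (h : ReflTransGen (MonochromeStep r χ) a b) :
    ∃ l : List X, IsRChain r l ∧ Monochrome χ l ∧ a ∈ l ∧ b ∈ l := by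
  obtain ⟨l, hne, hl, rfl, rfl⟩ := List.exists_isChain_ne_nil_of_relationReflTransGen h
  obtain ⟨hr, hm⟩ := isChain_monochromeStep_iff.1 hl
  exact ⟨l, hr, hm, List.head_mem hne, List.getLast_mem hne⟩

theorem exists_coloring_of_rDisjoint_cover {r D : ℝ} (U : Fin (n + 1) → Set (Set X))
    (hcover : ∀ x : X, ∃ i, ∃ u ∈ U i, x ∈ u)
    (hdisj : ∀ i, ∀ u ∈ U i, ∀ v ∈ U i, u ≠ v → ∀ x ∈ u, ∀ y ∈ v, r < dist x y)
    (hdiam : ∀ i, ∀ u ∈ U i, ediam u ≤ ENNReal.ofReal D) :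
    ∃ χ : X → Fin (n + 1), ∀ l : List X, IsRChain r l → Monochrome χ l →
      ediam {x | x ∈ l} ≤ ENNReal.ofReal D := by
  choose χ u hu hxu using hcover
  have step_eq : ∀ a b, MonochromeStep r χ a b → u a = u b := fun a b ⟨hab, hχ⟩ ↦ by
    by_contra hne
    exact (hdisj _ _ (hu a) _ (hχ ▸ hu b) hne a (hxu a) b (hxu b)).not_ge hab
  refine ⟨χ, fun l hr hm ↦ ?_⟩
  rcases l with _ | ⟨a, l⟩
  · simp
  have hl := isChain_monochromeStep_iff.2 ⟨hr, hm⟩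
  calc ediam {x | x ∈ a :: l} ≤ ediam (u a) :=
        ediam_mono fun x hx ↦ hl.apply_eq_apply step_eq hx List.mem_cons_self ▸ hxu x
    _ ≤ ENNReal.ofReal D := hdiam _ _ (hu a)

theorem exists_rDisjoint_cover_of_coloring {r D : ℝ} (χ : X → Fin (n + 1))
    (hχ : ∀ l : List X, IsRChain r l → Monochrome χ l → ediam {x | x ∈ l} ≤ ENNReal.ofReal D) :
    ∃ U : Fin (n + 1) → Set (Set X),
      (∀ x : X, ∃ i, ∃ u ∈ U i, x ∈ u) ∧
      (∀ i, ∀ u ∈ U i, ∀ v ∈ U i, u ≠ v → ∀ x ∈ u, ∀ y ∈ v, r < dist x y) ∧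
      (∀ i, ∀ u ∈ U i, ediam u ≤ ENNReal.ofReal D) := by
  set E := ReflTransGen (MonochromeStep r χ)
  have color_eq {a b : X} (h : E a b) : χ a = χ b := by
    obtain ⟨l, -, hm, ha, hb⟩ := exists_monochrome_rChain_of_reflTransGen h
    exact hm a ha b hb
  have edist_le {a b : X} (h : E a b) : edist a b ≤ ENNReal.ofReal D := by
    obtain ⟨l, hr, hm, ha, hb⟩ := exists_monochrome_rChain_of_reflTransGen h
    exact (edist_le_ediam_of_mem (s := {x | x ∈ l}) ha hb).trans (hχ l hr hm)
  refine ⟨fun i ↦ (fun x ↦ {y | E x y}) '' {x | χ x = i}, fun x ↦ ⟨χ x, _, ⟨x, rfl, rfl⟩, .refl⟩,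
    ?_, ?_⟩
  · rintro i _ ⟨a, ha, rfl⟩ _ ⟨b, hb, rfl⟩ hne x hx y hy
    by_contra! hxy
    have hxy : E x y := .single ⟨hxy, by rw [← color_eq hx, ← color_eq hy, ha, hb]⟩
    have hab : E a b := (hx.trans hxy).trans (symm hy)
    exact hne (Set.ext fun z ↦ ⟨fun hz ↦ (symm hab).trans hz, hab.trans⟩)
  · rintro i _ ⟨a, -, rfl⟩
    exact ediam_le fun y hy z hz ↦ edist_le ((symm hy).trans hz)

end Coloring

theorem asdimCol_iff_coloring {X : Type*} [MetricSpace X] (n : ℕ) :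
    AsdimColLE X n ↔
      ∀ r > (0 : ℝ), ∃ D > (0 : ℝ), ∃ χ : X → Fin (n + 1),
        ∀ l : List X, IsRChain r l → Monochrome χ l →
          EMetric.diam {x | x ∈ l} ≤ ENNReal.ofReal D := by
  constructor
  · intro h r hr
    obtain ⟨D, hD, U, hcover, hdisj, hdiam⟩ := h r hr
    exact ⟨D, hD, exists_coloring_of_rDisjoint_cover U hcover hdisj hdiam⟩
  · intro h r hr
    obtain ⟨D, hD, χ, hχ⟩ := h r hr
    exact ⟨D, hD, exists_rDisjoint_cover_of_coloring χ hχ⟩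
end

section
/- For every metric space X and every n ∈ ℕ, asdim(X) ≤ n if and only if asdim_col(X) ≤ n. -/
open Metric Set

/-!
A colouring gives the multiplicity bound because an `r`-ball meets at most one member of a
`2r`-disjoint family, hence at most one member of each colour.

Conversely, take a cover `U` by uniformly bounded sets such that every ball of radius `(n + 2) r`
meets at most `n + 1` of its members. For a point `x`, the families of members of `U` met by the
balls of radius `r, 2r, …, (n + 2) r` around `x` form an increasing chain of `n + 2` families, the
first nonempty and the last with at most `n + 1` members, so the chain stalls at some step `i`.
Give `x` the colour `i` and group the points of colour `i` by the family met by their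
`(i + 1) r`-ball. Two points of the same colour in different groups are more than `r` apart,
and each group lies in the `(i + 1) r`-neighbourhood of a single member of `U`.
-/

open scoped ENNReal

theorem Monotone.exists_succ_subset_of_ncard_le {α : Type*} {N : ℕ → Set α} (hN : Monotone N)
    {m : ℕ} (hfin : (N m).Finite) (h0 : (N 0).Nonempty) (hm : (N m).ncard ≤ m) :
    ∃ i < m, N (i + 1) ⊆ N i := by
  by_contra! hgrow
  have hcard : ∀ k ≤ m, k + 1 ≤ (N k).ncard := by
    intro k hk
    induction k with
    | zero => exact (ncard_pos (hfin.subset (hN hk))).2 h0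
    | succ k ih =>
      have hss : N k ⊂ N (k + 1) := (hN k.le_succ).ssubset_of_not_subset (hgrow k hk)
      have := ncard_lt_ncard hss (hfin.subset (hN hk))
      have := ih (by omega)
      omega
  have := hcard m le_rfl
  omega

section

variable {X : Type*} [PseudoMetricSpace X]

def nearMembers (U : Set (Set X)) (t : ℝ) (x : X) : Set (Set X) :=
  {u ∈ U | (u ∩ ball x t).Nonempty}

def IsRDisjoint (r : ℝ) (V : Set (Set X)) : Prop :=
  ∀ u ∈ V, ∀ v ∈ V, u ≠ v → ∀ x ∈ u, ∀ y ∈ v, r < dist x y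

def gapPiece (U : Set (Set X)) (t s : ℝ) (σ : Set (Set X)) : Set X :=
  {x | nearMembers U (t + s) x ⊆ nearMembers U t x ∧ nearMembers U t x = σ}

variable {U V σ : Set (Set X)} {u : Set X} {r s t t' : ℝ} {x y : X}

theorem nearMembers_mono (h : t ≤ t') : nearMembers U t x ⊆ nearMembers U t' x :=
  fun _ ⟨hu, p, hpu, hpx⟩ => ⟨hu, p, hpu, ball_subset_ball h hpx⟩

theorem mem_nearMembers_of_mem (hu : u ∈ U) (hxu : x ∈ u) (ht : 0 < t) :
    u ∈ nearMembers U t x :=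
  ⟨hu, x, hxu, mem_ball_self ht⟩

theorem nearMembers_iUnion {ι : Type*} (V : ι → Set (Set X)) :
    nearMembers (⋃ i, V i) t x = ⋃ i, nearMembers (V i) t x := by
  ext u
  simp only [nearMembers, mem_ofPred_eq, mem_iUnion, exists_and_right]

theorem IsRDisjoint.subsingleton_nearMembers (hV : IsRDisjoint (2 * r) V) :
    (nearMembers V r x).Subsingleton := by
  rintro u ⟨hu, a, hau, hax⟩ v ⟨hv, b, hbv, hbx⟩
  by_contra hne
  have hfar := hV u hu v hv hne a hau b hbv
  have hnear : dist a b < 2 * r :=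
    calc dist a b ≤ dist a x + dist x b := dist_triangle a x b
      _ < r + r := add_lt_add (mem_ball.1 hax) (mem_ball'.1 hbx)
      _ = 2 * r := by ring
  linarith

theorem exists_nearMembers_add_subset {n : ℕ} (hr : 0 < r) (hx : x ∈ ⋃₀ U)
    (hfin : (nearMembers U ((n + 2) * r) x).Finite)
    (hcard : (nearMembers U ((n + 2) * r) x).ncard ≤ n + 1) :
    ∃ i : Fin (n + 1), nearMembers U ((i + 1) * r + r) x ⊆ nearMembers U ((i + 1) * r) x := by
  set N : ℕ → Set (Set X) := fun j => nearMembers U ((j + 1) * r) x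
  have hN : Monotone N := fun a b hab => nearMembers_mono (by gcongr)
  have hlast : N (n + 1) = nearMembers U ((n + 2) * r) x := by
    simp only [N]
    congr 1
    push_cast
    ring
  obtain ⟨u, hu, hxu⟩ := hx
  have h0 : (N 0).Nonempty := ⟨u, mem_nearMembers_of_mem hu hxu (by simpa using hr)⟩
  obtain ⟨i, hi, hstall⟩ :=
    hN.exists_succ_subset_of_ncard_le (hlast ▸ hfin) h0 (hlast ▸ hcard)
  refine ⟨⟨i, hi⟩, ?_⟩
  convert hstall using 3
  push_cast
  ring

theorem lt_dist_of_mem_nearMembers (hxu : u ∈ nearMembers U t x)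
    (hy : nearMembers U (t + s) y ⊆ nearMembers U t y) (hyu : u ∉ nearMembers U t y) :
    s < dist x y := by
  obtain ⟨hu, p, hpu, hpx⟩ := hxu
  by_contra! hxy
  refine hyu (hy ⟨hu, p, hpu, ?_⟩)
  rw [mem_ball] at hpx ⊢
  calc dist p y ≤ dist p x + dist x y := dist_triangle p x y
    _ < t + s := add_lt_add_of_lt_of_le hpx hxy

theorem isRDisjoint_range_gapPiece : IsRDisjoint s (range (gapPiece U t s)) := by
  rintro _ ⟨_, rfl⟩ _ ⟨_, rfl⟩ hne x ⟨hx, rfl⟩ y ⟨hy, rfl⟩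
  have hne' : nearMembers U t x ≠ nearMembers U t y := fun h => hne (congrArg _ h)
  by_cases hxy : nearMembers U t x ⊆ nearMembers U t y
  · obtain ⟨u, huy, hux⟩ := not_subset.1 fun hyx => hne' (hxy.antisymm hyx)
    rw [dist_comm]
    exact lt_dist_of_mem_nearMembers huy hx hux
  · obtain ⟨u, hux, huy⟩ := not_subset.1 hxy
    exact lt_dist_of_mem_nearMembers hux hy huy

theorem gapPiece_subset_thickening (hu : u ∈ σ) : gapPiece U t s σ ⊆ thickening t u := by
  rintro z ⟨-, hz⟩
  obtain ⟨-, p, hpu, hpz⟩ := hz ▸ hu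
  exact mem_thickening_iff.2 ⟨p, hpu, mem_ball'.1 hpz⟩

theorem ediam_gapPiece_le (hcover : ⋃₀ U = univ) (ht : 0 < t) {d : ℝ≥0∞}
    (hd : ∀ u ∈ U, ediam u ≤ d) : ediam (gapPiece U t s σ) ≤ d + 2 * ENNReal.ofReal t := by
  rcases (gapPiece U t s σ).eq_empty_or_nonempty with hempty | ⟨x, hx⟩
  · simp [hempty]
  obtain ⟨u, hu, hxu⟩ := mem_sUnion.1 (hcover ▸ mem_univ x)
  have huσ : u ∈ σ := hx.2 ▸ mem_nearMembers_of_mem hu hxu ht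
  calc ediam (gapPiece U t s σ) ≤ ediam (thickening t u) :=
        ediam_mono (gapPiece_subset_thickening huσ)
    _ ≤ ediam u + 2 * ENNReal.ofReal t := by
        have := ediam_thickening_le (s := u) t.toNNReal
        rwa [Real.coe_toNNReal _ ht.le] at this
    _ ≤ d + 2 * ENNReal.ofReal t := by grw [hd u hu]

end

section

variable {X : Type*} [MetricSpace X] {n : ℕ}

theorem AsdimColLE.asdimLE (h : AsdimColLE X n) : AsdimLE X n := by
  intro r hr
  obtain ⟨D, hD, V, hcover, hdisj, hdiam⟩ := h (2 * r) (by positivity)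
  refine ⟨D, hD, ⋃ i, V i, ?_, ?_, fun x => ?_⟩
  · refine eq_univ_of_forall fun x => ?_
    obtain ⟨i, u, hu, hxu⟩ := hcover x
    exact ⟨u, mem_iUnion.2 ⟨i, hu⟩, hxu⟩
  · intro u hu
    obtain ⟨i, hu⟩ := mem_iUnion.1 hu
    exact hdiam i u hu
  · have hsub (i : Fin (n + 1)) : (nearMembers (V i) r x).Subsingleton :=
      IsRDisjoint.subsingleton_nearMembers (hdisj i)
    change (nearMembers (⋃ i, V i) r x).Finite ∧ (nearMembers (⋃ i, V i) r x).ncard ≤ n + 1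
    rw [nearMembers_iUnion]
    refine ⟨finite_iUnion fun i => (hsub i).finite, ?_⟩
    calc (⋃ i, nearMembers (V i) r x).ncard ≤ ∑ i, (nearMembers (V i) r x).ncard :=
          ncard_iUnion_le_of_fintype _
      _ ≤ ∑ _i : Fin (n + 1), 1 :=
          Finset.sum_le_sum fun i _ => (ncard_le_one (hsub i).finite).2 (hsub i)
      _ = n + 1 := by simp

theorem AsdimLE.asdimColLE (h : AsdimLE X n) : AsdimColLE X n := by
  intro r hr
  obtain ⟨D, hD, U, hcover, hdiam, hmult⟩ := h ((n + 2) * r) (by positivity)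
  refine ⟨D + 2 * ((n + 1) * r), by positivity, fun i => range (gapPiece U ((i + 1) * r) r),
    fun x => ?_, fun i => isRDisjoint_range_gapPiece, ?_⟩
  · obtain ⟨i, hi⟩ :=
      exists_nearMembers_add_subset hr (hcover ▸ mem_univ x) (hmult x).1 (hmult x).2
    exact ⟨i, _, mem_range_self _, hi, rfl⟩
  · rintro i _ ⟨σ, rfl⟩
    have hi : ((i : ℕ) + 1 : ℝ) * r ≤ (n + 1) * r := by
      gcongr
      exact_mod_cast i.is_le
    calc ediam (gapPiece U ((i + 1) * r) r σ)
        ≤ ENNReal.ofReal D + 2 * ENNReal.ofReal ((i + 1) * r) :=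
          ediam_gapPiece_le hcover (by positivity) hdiam
      _ ≤ ENNReal.ofReal D + 2 * ENNReal.ofReal ((n + 1) * r) := by grw [hi]
      _ = ENNReal.ofReal (D + 2 * ((n + 1) * r)) := by
          rw [ENNReal.ofReal_add hD.le (by positivity), ENNReal.ofReal_mul zero_le_two,
            ENNReal.ofReal_ofNat]

end

theorem asdim_eq_asdimCol (X : Type*) [MetricSpace X] (n : ℕ) :
    AsdimLE X n ↔ AsdimColLE X n :=
  ⟨AsdimLE.asdimColLE, AsdimColLE.asdimLE⟩
end

section
/- Let X be a metric space and n ∈ ℕ. Then asdim(X) ≤ n if and only if for every r > 0 there exists D > 0 such that for every finite subset F ⊆ X there is a coloring χ : F → Fin (n+1) such that every χ-monochrome r-chain C ⊆ F has diameter at most D. -/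
open Metric Set

/-!
Forward direction: take a cover `U` of `X` by uniformly bounded sets such that every ball of radius
`r(n+2)` meets at most `n + 1` of them. The families of members of `U` meeting `B(x, r(k+1))`,
`k = 0, …, n+1`, increase with `k` and have at most `n + 1` elements, so one of the first `n + 1`
steps is stationary; color `x` by it. If `d(a, b) ≤ r` and `a`, `b` have the same color `k`, the
stationarity at both points forces the two families at level `k` to coincide. Hence along a
monochrome `r`-chain this family is constant, and the whole chain stays within `r(n+1)` of one
member of `U`.

Backward direction: by compactness of `(Fin (n+1))^X`, the colorings of finite sets glue to one
coloring of `X` whose monochrome `2r`-chains are uniformly bounded. The monochrome `2r`-chain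
components of that coloring cover `X`, and two points of an `r`-ball with the same color lie in
the same component, so an `r`-ball meets at most `n + 1` components.
-/

open Relation

section

variable {X : Type*} [MetricSpace X]

section Chains

variable {κ : Type*}

def MonochromeAdj (r : ℝ) (χ : X → κ) (a b : X) : Prop :=
  dist a b ≤ r ∧ χ a = χ b

instance (r : ℝ) (χ : X → κ) : Std.Symm (MonochromeAdj r χ) where
  symm _ _ h := ⟨dist_comm (α := X) .. ▸ h.1, h.2.symm⟩

def monochromeComponent (r : ℝ) (χ : X → κ) (x : X) : Set X :=
  {y | ReflTransGen (MonochromeAdj r χ) x y}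

lemma mem_monochromeComponent_self (r : ℝ) (χ : X → κ) (x : X) :
    x ∈ monochromeComponent r χ x :=
  ReflTransGen.refl

lemma monochromeComponent_eq_of_mem {r : ℝ} {χ : X → κ} {x y : X}
    (hy : y ∈ monochromeComponent r χ x) :
    monochromeComponent r χ y = monochromeComponent r χ x :=
  ext fun _ => ⟨hy.trans, (symm hy).trans⟩

lemma apply_eq_of_mem_monochromeComponent {α : Type*} {r : ℝ} {χ : X → κ} {f : X → α}
    (hf : ∀ a b, MonochromeAdj r χ a b → f a = f b) {x y : X}
    (hy : y ∈ monochromeComponent r χ x) : f x = f y := by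
  induction hy with
  | refl => rfl
  | tail _ hbc ih => exact ih.trans (hf _ _ hbc)

variable {n : ℕ} {r : ℝ} {χ : X → Fin (n + 1)}

lemma reflTransGen_monochromeAdj_of_mem {l : List X} (hl : IsRChain r l) (hχ : Monochrome χ l)
    {x y : X} (hx : x ∈ l) (hy : y ∈ l) : ReflTransGen (MonochromeAdj r χ) x y := by
  have hchain : l.IsChain (MonochromeAdj r χ) :=
    hl.imp_of_mem_imp fun a b ha hb hab => ⟨hab, hχ a ha b hb⟩
  have hne : l ≠ [] := List.ne_nil_of_mem hx
  have hhead : ∀ z ∈ l, ReflTransGen (MonochromeAdj r χ) (l.head hne) z :=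
    hchain.induction _ _ (fun _ _ hab h => h.tail hab) fun _ => .refl
  exact (symm (hhead x hx)).trans (hhead y hy)

lemma exists_monochrome_isRChain_of_reflTransGen {x y : X}
    (h : ReflTransGen (MonochromeAdj r χ) x y) :
    ∃ l, IsRChain r l ∧ Monochrome χ l ∧ x ∈ l ∧ y ∈ l := by
  obtain ⟨l, hchain, hlast⟩ := List.exists_isChain_cons_of_relationReflTransGen h
  have hcolor : ∀ z ∈ x :: l, χ z = χ x :=
    hchain.induction _ _ (fun _ _ hab ha => hab.2.symm.trans ha) fun _ => rfl
  exact ⟨x :: l, hchain.imp fun _ _ h => h.1,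
    fun a ha b hb => (hcolor a ha).trans (hcolor b hb).symm, List.mem_cons_self,
    hlast ▸ List.getLast_mem _⟩

lemma forall_monochrome_isRChain_ediam_le_iff {d : ENNReal} :
    (∀ l : List X, IsRChain r l → Monochrome χ l → ediam {x | x ∈ l} ≤ d) ↔
      ∀ x, ediam (monochromeComponent r χ x) ≤ d := by
  constructor
  · intro h x
    refine ediam_le fun y hy z hz => ?_
    obtain ⟨l, hl, hχ, hyl, hzl⟩ :=
      exists_monochrome_isRChain_of_reflTransGen ((symm hy).trans hz)
    exact edist_le_of_ediam_le hyl hzl (h l hl hχ)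
  · intro h l hl hχ
    refine ediam_le fun y hy z hz => ?_
    exact edist_le_of_ediam_le (mem_monochromeComponent_self r χ y)
      (reflTransGen_monochromeAdj_of_mem hl hχ hy hz) (h y)

end Chains

theorem exists_eq_succ_of_monotone_of_ncard_le {α : Type*} {A : ℕ → Set α} (hA : Monotone A)
    {n : ℕ} (h0 : (A 0).Nonempty) (hfin : (A (n + 1)).Finite) (hcard : (A (n + 1)).ncard ≤ n + 1) :
    ∃ k ≤ n, A k = A (k + 1) := by
  by_contra! hne
  have hgrow : ∀ k ≤ n + 1, k + 1 ≤ (A k).ncard := by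
    intro k hk
    induction k with
    | zero => exact (ncard_pos (hfin.subset (hA (Nat.zero_le _)))).2 h0
    | succ k ih =>
      exact (ih (by omega)).trans_lt <| ncard_lt_ncard
        ((hA k.le_succ).ssubset_of_ne (hne k (by omega))) (hfin.subset (hA hk))
  have := hgrow (n + 1) le_rfl
  omega

section BallMeeting

def ballMeeting (U : Set (Set X)) (x : X) (ρ : ℝ) : Set (Set X) :=
  {u ∈ U | (u ∩ ball x ρ).Nonempty}

variable {U : Set (Set X)}

lemma ballMeeting_subset_ballMeeting {x y : X} {ρ ρ' : ℝ} (h : ρ + dist x y ≤ ρ') :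
    ballMeeting U x ρ ⊆ ballMeeting U y ρ' :=
  fun _ hu => ⟨hu.1, hu.2.mono (inter_subset_inter_right _ (ball_subset_ball' h))⟩

lemma ballMeeting_eq_of_dist_le {x y : X} {ρ ρ' : ℝ}
    (hx : ballMeeting U x ρ = ballMeeting U x ρ') (hy : ballMeeting U y ρ = ballMeeting U y ρ')
    (h : ρ + dist x y ≤ ρ') : ballMeeting U x ρ = ballMeeting U y ρ :=
  ((ballMeeting_subset_ballMeeting h).trans hy.ge).antisymm
    ((ballMeeting_subset_ballMeeting (dist_comm x y ▸ h)).trans hx.ge)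

lemma ballMeeting_nonempty (hU : ⋃₀ U = univ) (x : X) {ρ : ℝ} (hρ : 0 < ρ) :
    (ballMeeting U x ρ).Nonempty := by
  obtain ⟨u, hu, hxu⟩ := mem_sUnion.1 (hU ▸ mem_univ x)
  exact ⟨u, hu, x, hxu, mem_ball_self hρ⟩

lemma ballMeeting_range_monochromeComponent_finite_and_ncard_le {κ : Type*} [Finite κ] {r : ℝ}
    {χ : X → κ} (x : X) :
    (ballMeeting (range (monochromeComponent (2 * r) χ)) x r).Finite ∧
      (ballMeeting (range (monochromeComponent (2 * r) χ)) x r).ncard ≤ Nat.card κ := by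
  set T := ballMeeting (range (monochromeComponent (2 * r) χ)) x r
  have hcomp : ∀ u ∈ T, ∀ p ∈ u, u = monochromeComponent (2 * r) χ p := by
    rintro _ ⟨⟨a, rfl⟩, -⟩ p hp
    exact (monochromeComponent_eq_of_mem hp).symm
  let color : T → κ := fun u => χ u.2.2.some
  have hinj : Function.Injective color := by
    rintro ⟨u, hu⟩ ⟨v, hv⟩ (huv : χ hu.2.some = χ hv.2.some)
    obtain ⟨hpu, hpx⟩ := hu.2.some_mem
    obtain ⟨hqv, hqx⟩ := hv.2.some_mem
    have hpq : MonochromeAdj (2 * r) χ hu.2.some hv.2.some :=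
      ⟨((dist_triangle_right _ _ x).trans_lt (add_lt_add hpx hqx)).le.trans_eq (two_mul r).symm,
        huv⟩
    rw [Subtype.mk.injEq, hcomp u hu _ hpu, hcomp v hv _ hqv,
      monochromeComponent_eq_of_mem (ReflTransGen.single hpq)]
  have : Finite T := Finite.of_injective color hinj
  exact ⟨toFinite T,
    (Nat.card_coe_set_eq T).symm.trans_le (Nat.card_le_card_of_injective color hinj)⟩

theorem exists_coloring_forall_monochromeComponent_subset_thickening {n : ℕ} {r : ℝ} (hr : 0 < r)
    (hU : ⋃₀ U = univ) (hmult : ∀ x, (ballMeeting U x (r * (n + 2))).Finite ∧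
      (ballMeeting U x (r * (n + 2))).ncard ≤ n + 1) :
    ∃ χ : X → Fin (n + 1), ∀ x, ∃ u ∈ U,
      monochromeComponent r χ x ⊆ thickening (r * (n + 1)) u := by
  set level : X → ℕ → Set (Set X) := fun x k => ballMeeting U x (r * (k + 1))
  have hlevel_mono : ∀ x, Monotone (level x) := fun x j k hjk =>
    ballMeeting_subset_ballMeeting (by rw [dist_self, add_zero]; gcongr)
  have hstable : ∀ x, ∃ k ≤ n, level x k = level x (k + 1) := fun x =>
    exists_eq_succ_of_monotone_of_ncard_le (hlevel_mono x)
      (ballMeeting_nonempty hU x (by simpa using hr))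
      (by simpa [level, add_assoc, one_add_one_eq_two] using (hmult x).1)
      (by simpa [level, add_assoc, one_add_one_eq_two] using (hmult x).2)
  choose k hkn hk using hstable
  set χ : X → Fin (n + 1) := fun x => ⟨k x, Nat.lt_succ_of_le (hkn x)⟩
  have hinv : ∀ a b, MonochromeAdj r χ a b → level a (k a) = level b (k b) := by
    rintro a b ⟨hab, hχab⟩
    have hkab : k a = k b := congrArg Fin.val hχab
    refine hkab ▸ ballMeeting_eq_of_dist_le (hk a) (hkab ▸ hk b) ?_
    push_cast
    linarith
  refine ⟨χ, fun x => ?_⟩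
  obtain ⟨u, hu0⟩ : (level x 0).Nonempty := ballMeeting_nonempty hU x (by simpa using hr)
  have hu := hlevel_mono x (Nat.zero_le (k x)) hu0
  refine ⟨u, hu.1, fun y hy => ?_⟩
  obtain ⟨z, hzu, hyz⟩ := (apply_eq_of_mem_monochromeComponent hinv hy ▸ hu).2
  refine mem_thickening_iff.2 ⟨z, hzu, ?_⟩
  rw [dist_comm]
  calc dist z y < r * (k y + 1) := hyz
    _ ≤ r * (n + 1) := by gcongr; exact_mod_cast hkn y

end BallMeeting

theorem AsdimLE.exists_coloring {n : ℕ} (h : AsdimLE X n) {r : ℝ} (hr : 0 < r) :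
    ∃ D > 0, ∃ χ : X → Fin (n + 1),
      ∀ x, ediam (monochromeComponent r χ x) ≤ ENNReal.ofReal D := by
  obtain ⟨D, hD, U, hU, hdiam, hmult⟩ := h (r * (n + 2)) (by positivity)
  obtain ⟨χ, hχ⟩ := exists_coloring_forall_monochromeComponent_subset_thickening hr hU hmult
  refine ⟨D + 2 * (r * (n + 1)), by positivity, χ, fun x => ?_⟩
  obtain ⟨u, hu, hsub⟩ := hχ x
  have hε : ((r * (n + 1)).toNNReal : ℝ) = r * (n + 1) := Real.coe_toNNReal _ (by positivity)
  calc ediam (monochromeComponent r χ x)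
      ≤ ediam (thickening ((r * (n + 1)).toNNReal : ℝ) u) := ediam_mono (by rwa [hε])
    _ ≤ ediam u + 2 * ENNReal.ofReal (r * (n + 1)) := ediam_thickening_le _
    _ ≤ ENNReal.ofReal D + ENNReal.ofReal (2 * (r * (n + 1))) := by
      rw [ENNReal.ofReal_mul zero_le_two, ENNReal.ofReal_ofNat]
      gcongr
      exact hdiam u hu
    _ = ENNReal.ofReal (D + 2 * (r * (n + 1))) := (ENNReal.ofReal_add hD.le (by positivity)).symm

theorem asdimLE_of_exists_coloring {n : ℕ}
    (h : ∀ r > 0, ∃ D > 0, ∃ χ : X → Fin (n + 1),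
      ∀ x, ediam (monochromeComponent r χ x) ≤ ENNReal.ofReal D) :
    AsdimLE X n := by
  intro r hr
  obtain ⟨D, hD, χ, hχ⟩ := h (2 * r) (by positivity)
  refine ⟨D, hD, range (monochromeComponent (2 * r) χ), ?_, ?_, fun x => ?_⟩
  · exact sUnion_eq_univ_iff.2 fun x => ⟨_, mem_range_self x, mem_monochromeComponent_self _ _ x⟩
  · rintro _ ⟨x, rfl⟩
    exact hχ x
  · obtain ⟨hfin, hcard⟩ :=
      ballMeeting_range_monochromeComponent_finite_and_ncard_le (r := r) (χ := χ) x
    exact ⟨hfin, hcard.trans_eq (Nat.card_eq_fintype_card.trans (Fintype.card_fin _))⟩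

theorem asdimLE_iff_exists_coloring {n : ℕ} :
    AsdimLE X n ↔ ∀ r > 0, ∃ D > 0, ∃ χ : X → Fin (n + 1),
      ∀ x, ediam (monochromeComponent r χ x) ≤ ENNReal.ofReal D :=
  ⟨fun h _ hr => h.exists_coloring hr, asdimLE_of_exists_coloring⟩

theorem exists_forall_finset_of_forall_exists {ι κ : Type*} [Finite κ]
    (P : Finset ι → (ι → κ) → Prop) (hP : ∀ F, ∃ χ, P F χ)
    (hanti : ∀ F G χ, F ⊆ G → P G χ → P F χ)
    (hloc : ∀ F χ χ', (∀ i ∈ F, χ i = χ' i) → P F χ → P F χ') :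
    ∃ χ, ∀ F, P F χ := by
  classical
  let _ : TopologicalSpace κ := ⊥
  have : DiscreteTopology κ := ⟨rfl⟩
  have hclosed : ∀ F, IsClosed {χ | P F χ} := by
    intro F
    have : {χ | P F χ} = F.restrict ⁻¹' (F.restrict '' {χ | P F χ}) := by
      refine (subset_preimage_image _ _).antisymm ?_
      rintro χ ⟨χ', hχ', heq⟩
      exact hloc F χ' χ (fun i hi => congr_fun heq ⟨i, hi⟩) hχ'
    rw [this]
    exact (isClosed_discrete _).preimage (Finset.continuous_restrict F)
  have hdir : Directed (· ⊇ ·) fun F => {χ | P F χ} := fun F G =>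
    ⟨F ∪ G, fun χ => hanti F _ χ Finset.subset_union_left,
      fun χ => hanti G _ χ Finset.subset_union_right⟩
  obtain ⟨χ, hχ⟩ := IsCompact.nonempty_iInter_of_directed_nonempty_isCompact_isClosed _ hdir
    hP (fun F => (hclosed F).isCompact) hclosed
  exact ⟨χ, mem_iInter.1 hχ⟩

theorem exists_coloring_of_forall_finite {n : ℕ} {r : ℝ} {d : ENNReal}
    (h : ∀ F : Set X, F.Finite → ∃ χ : X → Fin (n + 1), ∀ l : List X, (∀ x ∈ l, x ∈ F) →
      IsRChain r l → Monochrome χ l → ediam {x | x ∈ l} ≤ d) :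
    ∃ χ : X → Fin (n + 1), ∀ l : List X, IsRChain r l → Monochrome χ l →
      ediam {x | x ∈ l} ≤ d := by
  classical
  obtain ⟨χ, hχ⟩ := exists_forall_finset_of_forall_exists
    (fun (F : Finset X) χ => ∀ l : List X, (∀ x ∈ l, x ∈ F) →
      IsRChain r l → Monochrome χ l → ediam {x | x ∈ l} ≤ d)
    (fun F => h F F.finite_toSet)
    (fun _ _ _ hFG hG l hl => hG l fun x hx => hFG (hl x hx))
    (fun _ _ _ hagree hF l hl hc hm => hF l hl hc fun a ha b hb =>
      (hagree a (hl a ha)).trans ((hm a ha b hb).trans (hagree b (hl b hb)).symm))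
  exact ⟨χ, fun l => hχ l.toFinset l fun _ => List.mem_toFinset.2⟩

end

theorem asdim_iff_finite_colorings {X : Type*} [MetricSpace X] (n : ℕ) :
    AsdimLE X n ↔
      ∀ r > (0 : ℝ), ∃ D > (0 : ℝ), ∀ F : Set X, F.Finite →
        ∃ χ : X → Fin (n + 1),
          ∀ l : List X, (∀ x ∈ l, x ∈ F) → IsRChain r l → Monochrome χ l →
            EMetric.diam {x | x ∈ l} ≤ ENNReal.ofReal D := by
  rw [asdimLE_iff_exists_coloring]
  refine forall₂_congr fun r _ => exists_congr fun D => and_congr_right fun _ => ⟨?_, ?_⟩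
  · rintro ⟨χ, hχ⟩ F -
    exact ⟨χ, fun l _ => forall_monochrome_isRChain_ediam_le_iff.2 hχ l⟩
  · intro h
    obtain ⟨χ, hχ⟩ := exists_coloring_of_forall_finite h
    exact ⟨χ, forall_monochrome_isRChain_ediam_le_iff.1 hχ⟩
end

section
/- Let X be a metric space and n ∈ ℕ. Then asdim(X) ≤ n if and only if for every r > 0 there exists D > 0 such that for every finite r-connected subset F ⊆ X there is a coloring χ : F → Fin (n+1) such that every χ-monochrome r-chain C ⊆ F has diameter at most D. -/
open Metric Set

/-- A subset `F` is `r`-connected if any two of its points are joined by an `r`-chain in `F`. -/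
def IsRConnected {X : Type*} [MetricSpace X] (r : ℝ) (F : Set X) : Prop :=
  ∀ x ∈ F, ∀ y ∈ F, ∃ l : List X, (∀ z ∈ l, z ∈ F) ∧ IsRChain r l ∧
    l.head? = some x ∧ l.getLast? = some y

/-! If `asdim X ≤ n`, take a cover `U` whose `(n + 2)(r + 1)`-balls meet at most `n + 1` members.
For each `x` the sets of members meeting the balls of radius `(j + 1)(r + 1)`, `j = 0, …, n + 1`,
increase and have between `1` and `n + 1` elements, so they stabilise at some step `j x ≤ n`:
colour `x` by `j x`. Stabilisation absorbs a step of length `≤ r`, so along a monochrome `r`-chain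
these sets are all equal, and the whole chain stays near one member of `U`.

Conversely, colour the `r`-components of a finite set separately and pass to a colouring of all
of `X` by compactness (an ultrafilter on finite sets). The classes of "joined by a monochrome
`2r`-chain" have diameter at most `D`, and two classes of the same colour meeting an `r`-ball are
joined by one step, so such a ball meets at most `n + 1` of them. -/

open Filter Relation

theorem List.IsChain.reflTransGen_of_mem {α : Type*} {R : α → α → Prop} {a : α} {l : List α}
    (h : (a :: l).IsChain R) : ∀ z ∈ a :: l, ReflTransGen R a z :=
  h.induction _ _ (fun _ _ hxy hx => hx.tail hxy) fun _ => .refl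

theorem exists_coloring_of_forall_finset {ι α : Type*} [Finite α] {P : Finset ι → (ι → α) → Prop}
    (h : ∀ s, ∃ f, P s f) (hanti : ∀ ⦃s t⦄ f, s ⊆ t → P t f → P s f)
    (hloc : ∀ s ⦃f g⦄, (∀ i ∈ s, f i = g i) → P s f → P s g) :
    ∃ f, ∀ s, P s f := by
  choose F hF using h
  let 𝒰 : Ultrafilter (Finset ι) := .of atTop
  have hvalue : ∀ i, ∃ a, ∀ᶠ t in 𝒰, F t i = a := fun i => by
    obtain ⟨a, ha⟩ := (𝒰.map (F · i)).eq_pure_of_finite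
    exact ⟨a, Ultrafilter.mem_map.1 (ha ▸ rfl : ({a} : Set α) ∈ 𝒰.map (F · i))⟩
  choose f hf using hvalue
  refine ⟨f, fun s => ?_⟩
  obtain ⟨t, hst, hagree⟩ : ∃ t, s ⊆ t ∧ ∀ i ∈ s, F t i = f i :=
    ((show ∀ᶠ t in 𝒰, s ⊆ t from Ultrafilter.of_le _ (eventually_ge_atTop s)).and
      (eventually_all_finset s |>.2 fun i _ => hf i)).exists
  exact hloc s hagree (hanti _ hst (hF t))

theorem exists_succ_eq_of_ncard_le {α : Type*} {N : ℕ → Set α} (hN : Monotone N) {m : ℕ}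
    (hfin : (N m).Finite) (hne : (N 0).Nonempty) (hcard : (N m).ncard ≤ m) :
    ∃ j < m, N (j + 1) = N j := by
  by_contra! hstrict
  have hgrow : ∀ j ≤ m, j + 1 ≤ (N j).ncard := by
    intro j hj
    induction j with
    | zero => exact (ncard_pos (hfin.subset (hN (Nat.zero_le m)))).2 hne
    | succ j ih =>
      have hssub : N j ⊂ N (j + 1) := (hN j.le_succ).ssubset_of_ne (hstrict j hj).symm
      exact (ih (by omega)).trans_lt (ncard_lt_ncard hssub (hfin.subset (hN hj)))
  have := hgrow m le_rfl
  omega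

section

variable {α : Type*} [PseudoMetricSpace α]

theorem ediam_le_of_subset_thickening {s u : Set α} {δ D : ℝ}
    (hδ : 0 ≤ δ) (hD : 0 ≤ D) (hs : s ⊆ thickening δ u) (hu : ediam u ≤ ENNReal.ofReal D) :
    ediam s ≤ ENNReal.ofReal (D + 2 * δ) :=
  calc ediam s ≤ ediam (thickening (δ.toNNReal : ℝ) u) := by
        rw [Real.coe_toNNReal _ hδ]; exact ediam_mono hs
    _ ≤ ediam u + 2 * δ.toNNReal := ediam_thickening_le _
    _ ≤ ENNReal.ofReal (D + 2 * δ) := by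
        rw [ENNReal.ofReal_add hD (by positivity), ENNReal.ofReal_mul zero_le_two,
          ENNReal.ofReal_ofNat]
        exact add_le_add hu le_rfl

def membersMeetingBall (U : Set (Set α)) (x : α) (R : ℝ) : Set (Set α) :=
  {u ∈ U | (u ∩ ball x R).Nonempty}

theorem membersMeetingBall_mono (U : Set (Set α)) (x : α) : Monotone (membersMeetingBall U x) :=
  fun _ _ hR _ ⟨hu, p, hpu, hp⟩ => ⟨hu, p, hpu, ball_subset_ball hR hp⟩

theorem mem_membersMeetingBall {U : Set (Set α)} {u : Set α} {x : α} {R : ℝ} (hu : u ∈ U)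
    (hxu : x ∈ u) (hR : 0 < R) : u ∈ membersMeetingBall U x R :=
  ⟨hu, x, hxu, mem_ball_self hR⟩

theorem membersMeetingBall_subset_of_dist_le {U : Set (Set α)} {x y : α} {R s : ℝ}
    (hxy : dist x y ≤ s) : membersMeetingBall U y R ⊆ membersMeetingBall U x (R + s) :=
  fun _ ⟨hu, p, hpu, hp⟩ => ⟨hu, p, hpu, ball_subset_ball' (by rw [dist_comm]; linarith) hp⟩

end

section

variable {X : Type*} [MetricSpace X]

theorem exists_isRChain_of_reflTransGen {r : ℝ} {R : X → X → Prop}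
    (hR : ∀ u v, R u v → dist u v ≤ r) {x y : X} (h : ReflTransGen R x y) :
    ∃ l : List X, (∀ z ∈ l, ReflTransGen R x z) ∧ IsRChain r l ∧
      l.head? = some x ∧ l.getLast? = some y := by
  obtain ⟨l, hl, hlast⟩ := List.exists_isChain_cons_of_relationReflTransGen h
  exact ⟨x :: l, hl.reflTransGen_of_mem, hl.imp hR, rfl, by
    rw [List.getLast?_eq_some_getLast (List.cons_ne_nil _ _), hlast]⟩

def MonochromeChainsBoundedOn {n : ℕ} (χ : X → Fin (n + 1)) (r D : ℝ) (F : Set X) : Prop :=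
  ∀ l : List X, (∀ x ∈ l, x ∈ F) → IsRChain r l → Monochrome χ l →
    ediam {x | x ∈ l} ≤ ENNReal.ofReal D

namespace MonochromeChainsBoundedOn

variable {n : ℕ} {χ χ' : X → Fin (n + 1)} {r D : ℝ} {F F' : Set X}

theorem mono (h : MonochromeChainsBoundedOn χ r D F') (hF : F ⊆ F') :
    MonochromeChainsBoundedOn χ r D F :=
  fun l hl => h l fun x hx => hF (hl x hx)

theorem congr (h : MonochromeChainsBoundedOn χ r D F) (hχ : EqOn χ χ' F) :
    MonochromeChainsBoundedOn χ' r D F := fun l hl hc hm =>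
  h l hl hc fun x hx y hy => by rw [hχ (hl x hx), hχ (hl y hy)]; exact hm x hx y hy

theorem univ_of_forall_finset (h : ∀ s : Finset X, MonochromeChainsBoundedOn χ r D s) :
    MonochromeChainsBoundedOn χ r D univ :=
  fun l _ => by classical exact h l.toFinset l fun _ => List.mem_toFinset.2

end MonochromeChainsBoundedOn

theorem exists_monochromeChainsBoundedOn_univ_of_asdimLE {n : ℕ} (h : AsdimLE X n) {r : ℝ}
    (hr : 0 < r) : ∃ D > 0, ∃ χ : X → Fin (n + 1), MonochromeChainsBoundedOn χ r D univ := by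
  obtain ⟨D, hD, U, hcover, hdiam, hmult⟩ := h ((n + 1 + 1) * (r + 1)) (by positivity)
  let N : X → ℕ → Set (Set X) := fun x j => membersMeetingBall U x ((j + 1) * (r + 1))
  have hN_mono : ∀ x, Monotone (N x) := fun x _ _ hij =>
    membersMeetingBall_mono U x (by gcongr)
  have hcover' : ∀ x, ∃ u ∈ U, x ∈ u := fun x => mem_sUnion.1 (hcover ▸ mem_univ x)
  have hstable : ∀ x, ∃ j < n + 1, N x (j + 1) = N x j := fun x => by
    obtain ⟨u, hu, hxu⟩ := hcover' x
    have hN_last : N x (n + 1) = membersMeetingBall U x ((n + 1 + 1) * (r + 1)) := by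
      simp only [N, Nat.cast_add, Nat.cast_one]
    exact exists_succ_eq_of_ncard_le (hN_mono x) (hN_last ▸ (hmult x).1)
      ⟨u, mem_membersMeetingBall hu hxu (by positivity)⟩ (hN_last ▸ (hmult x).2)
  choose j hj hjN using hstable
  let χ : X → Fin (n + 1) := fun x => ⟨j x, hj x⟩
  have hshift : ∀ {x y}, dist x y ≤ r → j y ≤ j x → N y (j y) ⊆ N x (j x) := by
    intro x y hxy hji
    have : (j y : ℝ) ≤ j x := by exact_mod_cast hji
    rw [← hjN x]
    refine (membersMeetingBall_subset_of_dist_le hxy).trans (membersMeetingBall_mono U x ?_)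
    push_cast
    nlinarith
  have hsame : ∀ {x y}, dist x y ≤ r → χ x = χ y → N x (j x) = N y (j y) := fun {x y} hxy hχ =>
    have hjxy : j x = j y := congrArg Fin.val hχ
    (hshift (by rwa [dist_comm]) hjxy.le).antisymm (hshift hxy hjxy.ge)
  refine ⟨D + 2 * ((n + 1) * (r + 1)), by positivity, χ, ?_⟩
  rintro (_ | ⟨a, l⟩) - hl hmono
  · simp
  obtain ⟨u, hu, hau⟩ := hcover' a
  have hu_mem : ∀ z ∈ a :: l, u ∈ N z (j z) :=
    (hl.imp_of_mem_imp fun y z hy hz hyz => hsame hyz (hmono y hy z hz)).induction _ _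
      (fun _ _ hyz hy => hyz ▸ hy) fun _ => mem_membersMeetingBall hu hau (by positivity)
  refine ediam_le_of_subset_thickening (by positivity) hD.le (fun z hz => ?_) (hdiam u hu)
  obtain ⟨-, p, hpu, hp⟩ := hu_mem z hz
  refine mem_thickening_iff.2 ⟨p, hpu, (dist_comm z p ▸ mem_ball.1 hp).trans_le ?_⟩
  have : (j z : ℝ) + 1 ≤ n + 1 := by exact_mod_cast hj z
  gcongr

theorem exists_monochromeChainsBoundedOn_univ_of_finite {n : ℕ} {r D : ℝ}
    (h : ∀ F : Set X, F.Finite → ∃ χ : X → Fin (n + 1), MonochromeChainsBoundedOn χ r D F) :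
    ∃ χ : X → Fin (n + 1), MonochromeChainsBoundedOn χ r D univ := by
  obtain ⟨χ, hχ⟩ := exists_coloring_of_forall_finset (fun s => h s s.finite_toSet)
    (fun _ _ _ hst hχ => hχ.mono hst) fun _ _ _ hagree hχ => hχ.congr fun x hx => hagree x hx
  exact ⟨χ, .univ_of_forall_finset hχ⟩

theorem exists_monochromeChainsBoundedOn_of_isRConnected {n : ℕ} {r D : ℝ}
    (h : ∀ F : Set X, F.Finite → IsRConnected r F →
      ∃ χ : X → Fin (n + 1), MonochromeChainsBoundedOn χ r D F)
    {F : Set X} (hF : F.Finite) : ∃ χ : X → Fin (n + 1), MonochromeChainsBoundedOn χ r D F := by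
  let R : X → X → Prop := fun u v => u ∈ F ∧ v ∈ F ∧ dist u v ≤ r
  have : Std.Symm R := ⟨fun u v ⟨hu, hv, huv⟩ => ⟨hv, hu, dist_comm u v ▸ huv⟩⟩
  have hF_of_reach : ∀ {x z}, x ∈ F → ReflTransGen R x z → z ∈ F := fun hx hxz =>
    hxz.cases_tail.elim (· ▸ hx) fun ⟨_, _, hz⟩ => hz.2.1
  let component : X → Set X := fun a => {z ∈ F | ReflTransGen R a z}
  have hcomponent : ∀ a, IsRConnected r (component a) := by
    rintro a x ⟨hxF, hax⟩ y ⟨-, hay⟩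
    obtain ⟨l, hreach, hl, hhead, hlast⟩ :=
      exists_isRChain_of_reflTransGen (fun _ _ huv => huv.2.2) ((symm hax).trans hay)
    exact ⟨l, fun z hz => ⟨hF_of_reach hxF (hreach z hz), hax.trans (hreach z hz)⟩,
      hl, hhead, hlast⟩
  choose! χ hχ using fun S (hS : S ∈ range component) =>
    h S (hF.subset fun _ hz => by obtain ⟨a, rfl⟩ := hS; exact hz.1) (by
      obtain ⟨a, rfl⟩ := hS; exact hcomponent a)
  refine ⟨fun x => χ (component x) x, ?_⟩
  rintro (_ | ⟨a, l⟩) hlF hl hmono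
  · simp
  have hreach : ∀ z ∈ a :: l, ReflTransGen R a z :=
    (hl.imp_of_mem_imp fun u v hu hv huv => ⟨hlF u hu, hlF v hv, huv⟩).reflTransGen_of_mem
  have hcomponent_eq : ∀ z ∈ a :: l, component z = component a := fun z hz => by
    ext w
    exact and_congr_right fun _ => ⟨(hreach z hz).trans, (symm (hreach z hz)).trans⟩
  refine hχ _ (mem_range_self a) (a :: l) (fun z hz => ⟨hlF z hz, hreach z hz⟩) hl ?_
  intro u hu v hv
  simpa only [hcomponent_eq u hu, hcomponent_eq v hv] using hmono u hu v hv

theorem exists_cover_of_monochromeChainsBoundedOn_univ {n : ℕ} {χ : X → Fin (n + 1)} {r D : ℝ}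
    (hχ : MonochromeChainsBoundedOn χ (2 * r) D univ) :
    ∃ U : Set (Set X), ⋃₀ U = univ ∧ (∀ u ∈ U, ediam u ≤ ENNReal.ofReal D) ∧
      ∀ x, (membersMeetingBall U x r).Finite ∧ (membersMeetingBall U x r).ncard ≤ n + 1 := by
  let Q : X → X → Prop := fun u v => dist u v ≤ 2 * r ∧ χ u = χ v
  have : Std.Symm Q := ⟨fun u v ⟨huv, hχuv⟩ => ⟨dist_comm u v ▸ huv, hχuv.symm⟩⟩
  have hcolor : ∀ {y z}, ReflTransGen Q y z → χ y = χ z := fun h => by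
    induction h with
    | refl => rfl
    | tail _ hbc ih => exact ih.trans hbc.2
  have hedist : ∀ {y z}, ReflTransGen Q y z → edist y z ≤ ENNReal.ofReal D := fun hyz => by
    obtain ⟨l, hreach, hl, hhead, hlast⟩ := exists_isRChain_of_reflTransGen (fun _ _ h => h.1) hyz
    refine (edist_le_ediam_of_mem (s := {x | x ∈ l}) (List.mem_of_mem_head? hhead)
      (List.mem_of_mem_getLast? hlast)).trans (hχ l (fun _ _ => trivial) hl ?_)
    intro u hu v hv
    rw [← hcolor (hreach u hu), ← hcolor (hreach v hv)]
  let cls : X → Set X := fun a => {z | ReflTransGen Q a z}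
  have hcls_eq : ∀ {a z}, z ∈ cls a → cls z = cls a := fun haz => by
    ext w
    exact ⟨haz.trans, (symm haz).trans⟩
  refine ⟨range cls, eq_univ_of_forall fun x => ⟨cls x, mem_range_self x, .refl⟩, ?_, fun x => ?_⟩
  · rintro _ ⟨a, rfl⟩
    exact ediam_le fun y hy z hz => hedist ((symm hy).trans hz)
  have : Nonempty X := ⟨x⟩
  let color : Set X → Fin (n + 1) := fun u => χ (Classical.epsilon (· ∈ u))
  have hcolor_cls : ∀ {a z}, z ∈ cls a → color (cls a) = χ z := fun haz =>
    show χ _ = _ from (hcolor (Classical.epsilon_spec ⟨_, haz⟩)).symm.trans (hcolor haz)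
  have hinj : InjOn color (membersMeetingBall (range cls) x r) := by
    rintro _ ⟨⟨a, rfl⟩, y, hay, hy⟩ _ ⟨⟨b, rfl⟩, z, hbz, hz⟩ hab
    have hyz : Q y z := ⟨by linarith [dist_triangle_right y z x, mem_ball.1 hy, mem_ball.1 hz],
      (hcolor_cls hay).symm.trans (hab.trans (hcolor_cls hbz))⟩
    rw [← hcls_eq hay, ← hcls_eq hbz]
    exact (hcls_eq (.single hyz)).symm
  refine ⟨.of_injOn (mapsTo_univ _ _) hinj finite_univ, ?_⟩
  simpa using ncard_le_ncard_of_injOn color (fun _ _ => mem_univ _) hinj finite_univ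

end

theorem asdim_iff_finite_connected_colorings {X : Type*} [MetricSpace X] (n : ℕ) :
    AsdimLE X n ↔
      ∀ r > (0 : ℝ), ∃ D > (0 : ℝ), ∀ F : Set X, F.Finite → IsRConnected r F →
        ∃ χ : X → Fin (n + 1),
          ∀ l : List X, (∀ x ∈ l, x ∈ F) → IsRChain r l → Monochrome χ l →
            EMetric.diam {x | x ∈ l} ≤ ENNReal.ofReal D := by
  refine ⟨fun h r hr => ?_, fun h r hr => ?_⟩
  · obtain ⟨D, hD, χ, hχ⟩ := exists_monochromeChainsBoundedOn_univ_of_asdimLE h hr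
    exact ⟨D, hD, fun F _ _ => ⟨χ, hχ.mono (subset_univ F)⟩⟩
  · obtain ⟨D, hD, hconnected⟩ := h (2 * r) (by positivity)
    obtain ⟨χ, hχ⟩ := exists_monochromeChainsBoundedOn_univ_of_finite fun _ hF =>
      exists_monochromeChainsBoundedOn_of_isRConnected hconnected hF
    exact ⟨D, hD, exists_cover_of_monochromeChainsBoundedOn_univ hχ⟩
end

section
/- Let A and B be subsets of a metric space X, each carrying the induced metric, and let n ∈ ℕ. If asdim(A) ≤ n and asdim(B) ≤ n, then asdim(A ∪ B) ≤ n. -/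
/-!
Asymptotic dimension `≤ n` amounts to colourings: at every scale `s` the space is covered by
`n + 1` uniformly bounded families, each consisting of pairwise `s`-far-apart sets. Given a cover
of multiplicity `≤ n + 1` at scale `(n + 2) s`, the set of members within distance `k s` of a
point `x` can grow at most `n` times as `k` runs through `0, …, n + 1`, so it is stable at some
`k ≤ n`; colouring `x` by `k` and grouping points of colour `k` by that stable set of members
gives the colour classes. For a union, colour `i` of `A` (at scale `s`) is merged into colour `i`
of `B`: each `A`-set is absorbed by the `B`-sets it comes `s`-close to. Taking `B`'s colouring
at scale `3 s + 2 D`, where `D` bounds the `A`-sets, makes points that are `s`-close after the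
merge lie in the same merged set.
-/

open Metric Set

section ColoredCovers

variable {X Y : Type*} [MetricSpace X] [MetricSpace Y]

def FarApart (s : ℝ) (u v : Set X) : Prop :=
  ∀ x ∈ u, ∀ y ∈ v, s < dist x y

def DiamBounded (D : ℝ) (𝒰 : Set (Set X)) : Prop :=
  ∀ u ∈ 𝒰, ∀ x ∈ u, ∀ y ∈ u, dist x y ≤ D

def HasColoredCovers (S : Set X) (n : ℕ) : Prop :=
  ∀ s > 0, ∃ D > 0, ∃ C : Fin (n + 1) → Set (Set X),
    S ⊆ ⋃ i, ⋃₀ C i ∧ ∀ i, DiamBounded D (C i) ∧ (C i).Pairwise (FarApart s)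

lemma not_farApart_of_dist_le {s : ℝ} {u v : Set X} {x y : X} (hx : x ∈ u) (hy : y ∈ v)
    (hxy : dist x y ≤ s) : ¬ FarApart s u v :=
  fun hfar => (hfar x hx y hy).not_ge hxy

lemma Set.Pairwise.subsingleton_meets_ball {𝒰 : Set (Set X)} {r : ℝ}
    (h𝒰 : 𝒰.Pairwise (FarApart (2 * r))) (x : X) :
    {u ∈ 𝒰 | (u ∩ ball x r).Nonempty}.Subsingleton := by
  rintro u ⟨hu, p, hpu, hp⟩ v ⟨hv, q, hqv, hq⟩
  refine h𝒰.eq hu hv (not_farApart_of_dist_le hpu hqv ?_)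
  linarith [dist_triangle_right p q x, mem_ball.1 hp, mem_ball.1 hq]

section Isometry

variable {f : Y → X} {n : ℕ}

lemma HasColoredCovers.image (hf : Isometry f) {S : Set Y} (h : HasColoredCovers S n) :
    HasColoredCovers (f '' S) n := by
  intro s hs
  obtain ⟨D, hD, C, hcov, hC⟩ := h s hs
  refine ⟨D, hD, fun i => Set.image f '' C i, ?_, fun i => ⟨?_, ?_⟩⟩
  · rintro _ ⟨y, hy, rfl⟩
    obtain ⟨i, u, hu, hyu⟩ : ∃ i, ∃ u ∈ C i, y ∈ u := by simpa using hcov hy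
    exact mem_iUnion.2 ⟨i, _, mem_image_of_mem _ hu, mem_image_of_mem f hyu⟩
  · rintro _ ⟨u, hu, rfl⟩ _ ⟨x, hx, rfl⟩ _ ⟨y, hy, rfl⟩
    rw [hf.dist_eq]
    exact (hC i).1 u hu x hx y hy
  · rintro _ ⟨u, hu, rfl⟩ _ ⟨v, hv, rfl⟩ hne _ ⟨x, hx, rfl⟩ _ ⟨y, hy, rfl⟩
    rw [hf.dist_eq]
    exact (hC i).2 hu hv (ne_of_apply_ne _ hne) x hx y hy

lemma HasColoredCovers.preimage (hf : Isometry f) {S : Set X} (h : HasColoredCovers S n) :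
    HasColoredCovers (f ⁻¹' S) n := by
  intro s hs
  obtain ⟨D, hD, C, hcov, hC⟩ := h s hs
  refine ⟨D, hD, fun i => Set.preimage f '' C i, ?_, fun i => ⟨?_, ?_⟩⟩
  · intro y hy
    obtain ⟨i, u, hu, hyu⟩ : ∃ i, ∃ u ∈ C i, f y ∈ u := by simpa using hcov hy
    exact mem_iUnion.2 ⟨i, _, mem_image_of_mem _ hu, hyu⟩
  · rintro _ ⟨u, hu, rfl⟩ x hx y hy
    rw [← hf.dist_eq]
    exact (hC i).1 u hu _ hx _ hy
  · rintro _ ⟨u, hu, rfl⟩ _ ⟨v, hv, rfl⟩ hne x hx y hy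
    rw [← hf.dist_eq]
    exact (hC i).2 hu hv (ne_of_apply_ne _ hne) _ hx _ hy

end Isometry

section Stabilization

def membersNear (𝒰 : Set (Set X)) (x : X) (t : ℝ) : Set (Set X) :=
  {u ∈ 𝒰 | ∃ y ∈ u, dist x y ≤ t}

variable {𝒰 : Set (Set X)} {x y : X} {s t : ℝ}

lemma membersNear_mono (𝒰 : Set (Set X)) (x : X) : Monotone (membersNear 𝒰 x) :=
  fun _ _ htt' _ ⟨hu, y, hy, hxy⟩ => ⟨hu, y, hy, hxy.trans htt'⟩

lemma membersNear_subset_add_dist (𝒰 : Set (Set X)) (x y : X) (t : ℝ) :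
    membersNear 𝒰 y t ⊆ membersNear 𝒰 x (t + dist x y) :=
  fun _ ⟨hu, z, hz, hyz⟩ => ⟨hu, z, hz, by linarith [dist_triangle x y z]⟩

lemma membersNear_subset_meets_ball {r : ℝ} (htr : t < r) :
    membersNear 𝒰 x t ⊆ {u ∈ 𝒰 | (u ∩ ball x r).Nonempty} :=
  fun _ ⟨hu, y, hy, hxy⟩ => ⟨hu, y, hy, mem_ball'.2 (hxy.trans_lt htr)⟩

lemma dist_le_of_membersNear_eq {D : ℝ} {u : Set X} (h𝒰 : DiamBounded D 𝒰)
    (hu : u ∈ membersNear 𝒰 x t) (hxy : membersNear 𝒰 x t = membersNear 𝒰 y t) :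
    dist x y ≤ 2 * t + D := by
  obtain ⟨-, b, hb, hyb⟩ : u ∈ membersNear 𝒰 y t := hxy ▸ hu
  obtain ⟨hu𝒰, a, ha, hxa⟩ := hu
  linarith [dist_triangle4 x a b y, h𝒰 u hu𝒰 a ha b hb, dist_comm y b]

lemma membersNear_subset_of_stable (hx : membersNear 𝒰 x (t + s) = membersNear 𝒰 x t)
    (hxy : dist x y ≤ s) : membersNear 𝒰 y t ⊆ membersNear 𝒰 x t :=
  calc membersNear 𝒰 y t ⊆ membersNear 𝒰 x (t + dist x y) := membersNear_subset_add_dist ..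
    _ ⊆ membersNear 𝒰 x (t + s) := membersNear_mono _ _ (by linarith)
    _ = membersNear 𝒰 x t := hx

lemma Monotone.exists_map_succ_eq_of_ncard_le {α : Type*} {f : ℕ → Set α} {n : ℕ}
    (hf : Monotone f) (h0 : (f 0).Nonempty) (hfin : (f (n + 1)).Finite)
    (hcard : (f (n + 1)).ncard ≤ n + 1) : ∃ k < n + 1, f (k + 1) = f k := by
  by_contra! hne
  have hgrow : ∀ k ≤ n + 1, k < (f k).ncard := by
    intro k hk
    induction k with
    | zero => exact (ncard_pos (hfin.subset (hf (Nat.zero_le _)))).2 h0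
    | succ k ih =>
      have hlt : (f k).ncard < (f (k + 1)).ncard :=
        ncard_lt_ncard ((hf k.le_succ).ssubset_of_ne (hne k hk).symm) (hfin.subset (hf hk))
      have := ih (by omega)
      omega
  have := hgrow (n + 1) le_rfl
  omega

lemma exists_membersNear_stable {n : ℕ} {r : ℝ} (hx : x ∈ ⋃₀ 𝒰)
    (hfin : {u ∈ 𝒰 | (u ∩ ball x r).Nonempty}.Finite)
    (hcard : {u ∈ 𝒰 | (u ∩ ball x r).Nonempty}.ncard ≤ n + 1) (hs : 0 ≤ s)
    (hr : (n + 1) * s < r) :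
    ∃ k < n + 1, membersNear 𝒰 x (k * s + s) = membersNear 𝒰 x (k * s) := by
  have hmono : Monotone fun k : ℕ => membersNear 𝒰 x (k * s) :=
    fun _ _ hkl => membersNear_mono 𝒰 x (by gcongr)
  obtain ⟨u, hu, hxu⟩ := hx
  have hsub : membersNear 𝒰 x (((n + 1 : ℕ) : ℝ) * s) ⊆ {u ∈ 𝒰 | (u ∩ ball x r).Nonempty} :=
    membersNear_subset_meets_ball (by push_cast; exact hr)
  obtain ⟨k, hk, hstable⟩ := hmono.exists_map_succ_eq_of_ncard_le
    ⟨u, hu, x, hxu, by simp⟩ (hfin.subset hsub) ((ncard_le_ncard hsub hfin).trans hcard)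
  exact ⟨k, hk, by simpa [add_mul] using hstable⟩

end Stabilization

lemma hasColoredCovers_univ_of_asdimLE {n : ℕ} (h : AsdimLE X n) :
    HasColoredCovers (univ : Set X) n := by
  intro s hs
  obtain ⟨D, hD, 𝒰, hcov, hdiam, hmult⟩ := h ((n + 2) * s) (by positivity)
  have h𝒰 : DiamBounded D 𝒰 := fun u hu x hx y hy =>
    (edist_le_ofReal hD.le).1 ((edist_le_ediam_of_mem hx hy).trans (hdiam u hu))
  have hmem : ∀ x, x ∈ ⋃₀ 𝒰 := by simp [hcov]
  choose k hk hstable using fun x => exists_membersNear_stable (hmem x) (hmult x).1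
    (hmult x).2 hs.le (by linarith : ((n : ℝ) + 1) * s < (n + 2) * s)
  refine ⟨2 * (n * s) + D, by positivity,
    fun i => range fun σ => {x | k x = i ∧ membersNear 𝒰 x (i * s) = σ}, fun x _ => ?_,
    fun i => ⟨?_, ?_⟩⟩
  · exact mem_iUnion.2 ⟨⟨k x, hk x⟩, _, ⟨_, rfl⟩, rfl, rfl⟩
  · rintro _ ⟨σ, rfl⟩ x ⟨-, rfl⟩ y ⟨-, hyx⟩
    obtain ⟨u, hu, hxu⟩ := hmem x
    have hin : i * s ≤ n * s := by gcongr; exact_mod_cast Fin.is_le i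
    calc dist x y ≤ 2 * (i * s) + D := dist_le_of_membersNear_eq h𝒰
          (membersNear_mono 𝒰 x (by positivity) ⟨hu, x, hxu, by simp⟩) hyx.symm
      _ ≤ 2 * (n * s) + D := by linarith
  · rintro _ ⟨σ, rfl⟩ _ ⟨τ, rfl⟩ hne x ⟨hkx, rfl⟩ y ⟨hky, rfl⟩
    by_contra! hxy
    have hx : membersNear 𝒰 x (i * s + s) = membersNear 𝒰 x (i * s) := hkx ▸ hstable x
    have hy : membersNear 𝒰 y (i * s + s) = membersNear 𝒰 y (i * s) := hky ▸ hstable y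
    refine hne ?_
    rw [(membersNear_subset_of_stable hy (dist_comm x y ▸ hxy)).antisymm
      (membersNear_subset_of_stable hx hxy)]

lemma asdimLE_of_hasColoredCovers {n : ℕ} (h : HasColoredCovers (univ : Set X) n) :
    AsdimLE X n := by
  intro r hr
  obtain ⟨D, hD, C, hcov, hC⟩ := h (2 * r) (by positivity)
  refine ⟨D, hD, ⋃ i, C i, ?_, ?_, fun x => ?_⟩
  · simpa [sUnion_iUnion, eq_univ_iff_forall] using hcov
  · intro u hu
    obtain ⟨i, hu⟩ := mem_iUnion.1 hu
    exact ediam_le_of_forall_dist_le ((hC i).1 u hu)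
  · have hsing i := (hC i).2.subsingleton_meets_ball x
    have hsplit : {u ∈ ⋃ i, C i | (u ∩ ball x r).Nonempty} =
        ⋃ i, {u ∈ C i | (u ∩ ball x r).Nonempty} := by
      ext u
      simp only [mem_ofPred_eq, mem_iUnion, exists_and_right]
    rw [hsplit]
    refine ⟨finite_iUnion fun i => (hsing i).finite, ?_⟩
    calc _ ≤ ∑ i, {u ∈ C i | (u ∩ ball x r).Nonempty}.ncard := ncard_iUnion_le_of_fintype _
      _ ≤ ∑ _ : Fin (n + 1), 1 :=
          Finset.sum_le_sum fun i _ => (ncard_le_one (hsing i).finite).2 (hsing i)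
      _ = n + 1 := by simp

section Merge

def absorbNear (s : ℝ) (𝒰 : Set (Set X)) (V : Set X) : Set X :=
  V ∪ ⋃₀ {U ∈ 𝒰 | ¬ FarApart s U V}

def mergeFamily (s : ℝ) (𝒰 𝒱 : Set (Set X)) : Set (Set X) :=
  absorbNear s 𝒰 '' 𝒱 ∪ {U ∈ 𝒰 | ∀ V ∈ 𝒱, FarApart s U V}

variable {s D : ℝ} {𝒰 𝒱 : Set (Set X)} {U V V' : Set X} {x y : X}

lemma exists_dist_le_of_mem_absorbNear (h𝒰 : DiamBounded D 𝒰) (hs : 0 ≤ s) (hD : 0 ≤ D)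
    (hx : x ∈ absorbNear s 𝒰 V) : ∃ v ∈ V, dist x v ≤ s + D := by
  rcases hx with hxV | ⟨U, ⟨hU, hUV⟩, hxU⟩
  · exact ⟨x, hxV, by rw [dist_self]; positivity⟩
  · obtain ⟨u, hu, v, hv, huv⟩ : ∃ u ∈ U, ∃ v ∈ V, dist u v ≤ s := by
      simpa [FarApart] using hUV
    exact ⟨v, hv, by linarith [dist_triangle x u v, h𝒰 U hU x hxU u hu]⟩

lemma eq_of_mem_absorbNear (h𝒰 : DiamBounded D 𝒰) (hs : 0 ≤ s) (hD : 0 ≤ D)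
    (h𝒱 : 𝒱.Pairwise (FarApart (3 * s + 2 * D))) (hV : V ∈ 𝒱) (hV' : V' ∈ 𝒱)
    (hx : x ∈ absorbNear s 𝒰 V) (hy : y ∈ absorbNear s 𝒰 V') (hxy : dist x y ≤ s) :
    V = V' := by
  obtain ⟨v, hv, hxv⟩ := exists_dist_le_of_mem_absorbNear h𝒰 hs hD hx
  obtain ⟨v', hv', hyv'⟩ := exists_dist_le_of_mem_absorbNear h𝒰 hs hD hy
  refine h𝒱.eq hV hV' (not_farApart_of_dist_le hv hv' ?_)
  linarith [dist_triangle4 v x y v', dist_comm v x]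

lemma not_farApart_of_mem_absorbNear (h𝒰 : 𝒰.Pairwise (FarApart s)) (hU : U ∈ 𝒰)
    (hx : x ∈ absorbNear s 𝒰 V) (hy : y ∈ U) (hxy : dist x y ≤ s) : ¬ FarApart s U V := by
  rcases hx with hxV | ⟨U₀, ⟨hU₀, hU₀V⟩, hxU₀⟩
  · exact not_farApart_of_dist_le hy hxV (dist_comm x y ▸ hxy)
  · rwa [← h𝒰.eq hU₀ hU (not_farApart_of_dist_le hxU₀ hy hxy)]

lemma sUnion_union_subset_sUnion_mergeFamily :
    ⋃₀ 𝒰 ∪ ⋃₀ 𝒱 ⊆ ⋃₀ mergeFamily s 𝒰 𝒱 := by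
  rintro x (⟨U, hU, hxU⟩ | ⟨V, hV, hxV⟩)
  · by_cases hfar : ∀ V ∈ 𝒱, FarApart s U V
    · exact ⟨U, Or.inr ⟨hU, hfar⟩, hxU⟩
    · push Not at hfar
      obtain ⟨V, hV, hUV⟩ := hfar
      exact ⟨_, Or.inl ⟨V, hV, rfl⟩, Or.inr ⟨U, ⟨hU, hUV⟩, hxU⟩⟩
  · exact ⟨_, Or.inl ⟨V, hV, rfl⟩, Or.inl hxV⟩

lemma diamBounded_mergeFamily {D' : ℝ} (h𝒰 : DiamBounded D 𝒰) (h𝒱 : DiamBounded D' 𝒱)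
    (hs : 0 ≤ s) (hD : 0 ≤ D) (hD' : 0 ≤ D') :
    DiamBounded (D' + 2 * (s + D)) (mergeFamily s 𝒰 𝒱) := by
  rintro _ (⟨V, hV, rfl⟩ | ⟨hU, -⟩) x hx y hy
  · obtain ⟨v, hv, hxv⟩ := exists_dist_le_of_mem_absorbNear h𝒰 hs hD hx
    obtain ⟨v', hv', hyv'⟩ := exists_dist_le_of_mem_absorbNear h𝒰 hs hD hy
    linarith [dist_triangle4 x v v' y, h𝒱 V hV v hv v' hv', dist_comm y v']
  · linarith [h𝒰 _ hU x hx y hy]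

lemma pairwise_farApart_mergeFamily (h𝒰 : DiamBounded D 𝒰) (hs : 0 ≤ s) (hD : 0 ≤ D)
    (h𝒰s : 𝒰.Pairwise (FarApart s)) (h𝒱 : 𝒱.Pairwise (FarApart (3 * s + 2 * D))) :
    (mergeFamily s 𝒰 𝒱).Pairwise (FarApart s) := by
  rintro _ (⟨V, hV, rfl⟩ | ⟨hU, hUfar⟩) _ (⟨V', hV', rfl⟩ | ⟨hU', hU'far⟩) hne x hx y hy <;>
    by_contra! hxy
  · exact hne (congrArg _ (eq_of_mem_absorbNear h𝒰 hs hD h𝒱 hV hV' hx hy hxy))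
  · exact not_farApart_of_mem_absorbNear h𝒰s hU' hx hy hxy (hU'far V hV)
  · exact not_farApart_of_mem_absorbNear h𝒰s hU hy hx (dist_comm x y ▸ hxy) (hUfar V' hV')
  · exact not_farApart_of_dist_le hx hy hxy (h𝒰s hU hU' hne)

end Merge

lemma HasColoredCovers.union {A B : Set X} {n : ℕ} (hA : HasColoredCovers A n)
    (hB : HasColoredCovers B n) : HasColoredCovers (A ∪ B) n := by
  intro s hs
  obtain ⟨DA, hDA, 𝒰, hA𝒰, h𝒰⟩ := hA s hs
  obtain ⟨DB, hDB, 𝒱, hB𝒱, h𝒱⟩ := hB (3 * s + 2 * DA) (by positivity)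
  refine ⟨DB + 2 * (s + DA), by positivity, fun i => mergeFamily s (𝒰 i) (𝒱 i), ?_,
    fun i => ⟨diamBounded_mergeFamily (h𝒰 i).1 (h𝒱 i).1 hs.le hDA.le hDB.le,
      pairwise_farApart_mergeFamily (h𝒰 i).1 hs.le hDA.le (h𝒰 i).2 (h𝒱 i).2⟩⟩
  calc A ∪ B ⊆ (⋃ i, ⋃₀ 𝒰 i) ∪ ⋃ i, ⋃₀ 𝒱 i := union_subset_union hA𝒰 hB𝒱
    _ = ⋃ i, (⋃₀ 𝒰 i ∪ ⋃₀ 𝒱 i) := (iUnion_union_distrib _ _).symm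
    _ ⊆ _ := iUnion_mono fun i => sUnion_union_subset_sUnion_mergeFamily

end ColoredCovers

theorem asdim_union {X : Type*} [MetricSpace X] (A B : Set X) (n : ℕ)
    (hA : AsdimLE ↥A n) (hB : AsdimLE ↥B n) :
    AsdimLE ↥(A ∪ B) n := by
  have hA' : HasColoredCovers A n := by
    simpa only [Subtype.coe_image_univ] using
      (hasColoredCovers_univ_of_asdimLE hA).image isometry_subtype_coe
  have hB' : HasColoredCovers B n := by
    simpa only [Subtype.coe_image_univ] using
      (hasColoredCovers_univ_of_asdimLE hB).image isometry_subtype_coe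
  refine asdimLE_of_hasColoredCovers ?_
  simpa only [Subtype.coe_preimage_self] using
    (hA'.union hB').preimage (isometry_subtype_coe (s := A ∪ B))
end

section
/- Let G be a group equipped with a proper left-invariant metric and let n ∈ ℕ. Then asdim(G) ≤ n if and only if every subgroup H ⊆ G that is generated by a compact subset of G satisfies asdim(H) ≤ n (where H carries the induced metric). -/
open Metric Set

/-!
A subspace inherits `asdim ≤ n` by pulling covers back. Conversely, for a scale `r` let `H` be
the subgroup generated by the closed `r`-ball about `1`, which is compact by properness. The
cosets of `H` are isometric translates of `H` and are `r`-separated, so translating an `r`-scale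
cover of `H` to every coset gives an `r`-scale cover of `G` with the same multiplicity bound.
-/

def IsAsdimCover_s13 {X : Type*} [MetricSpace X] (U : Set (Set X)) (r D : ℝ) (n : ℕ) : Prop :=
  ⋃₀ U = univ ∧ (∀ u ∈ U, Metric.ediam u ≤ ENNReal.ofReal D) ∧
    ∀ x : X, {u ∈ U | (u ∩ ball x r).Nonempty}.Finite ∧
      {u ∈ U | (u ∩ ball x r).Nonempty}.ncard ≤ n + 1

theorem asdimLE_iff_exists_isAsdimCover {X : Type*} [MetricSpace X] {n : ℕ} :
    AsdimLE X n ↔ ∀ r > (0 : ℝ), ∃ D > (0 : ℝ), ∃ U : Set (Set X), IsAsdimCover_s13 U r D n :=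
  Iff.rfl

theorem Set.Finite.ncard_le_of_subset_image {α β : Type*} {S : Set β} {T : Set α} {f : α → β}
    (hT : T.Finite) (hS : S ⊆ f '' T) {m : ℕ} (hm : T.ncard ≤ m) : S.Finite ∧ S.ncard ≤ m :=
  ⟨(hT.image f).subset hS,
    (ncard_le_ncard hS (hT.image f)).trans ((ncard_image_le hT).trans hm)⟩

namespace IsAsdimCover_s13

variable {X Y : Type*} [MetricSpace X] [MetricSpace Y] {U : Set (Set Y)} {r D : ℝ} {n : ℕ}

theorem preimage_isometry {f : X → Y} (hf : Isometry f) (hU : IsAsdimCover_s13 U r D n) :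
    IsAsdimCover_s13 ((f ⁻¹' ·) '' U) r D n := by
  obtain ⟨hcov, hdiam, hball⟩ := hU
  refine ⟨?_, ?_, fun x => ?_⟩
  · rw [sUnion_image, ← preimage_iUnion₂, ← sUnion_eq_biUnion, hcov, preimage_univ]
  · rintro _ ⟨u, hu, rfl⟩
    rw [← hf.ediam_image]
    exact (ediam_mono (image_preimage_subset f u)).trans (hdiam u hu)
  · refine (hball (f x)).1.ncard_le_of_subset_image (f := (f ⁻¹' ·)) ?_ (hball (f x)).2
    rintro _ ⟨⟨u, hu, rfl⟩, y, hyu, hyx⟩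
    refine ⟨u, ⟨hu, f y, hyu, ?_⟩, rfl⟩
    rwa [mem_ball, hf.dist_eq]

theorem iUnion_image_isometry {ι : Type*} {φ : ι → Y → X} (hφ : ∀ i, Isometry (φ i))
    (hcover : ∀ x, ∃ i y, φ i y = x) (hsep : ∀ i j y y', dist (φ i y) (φ j y') < r → i = j)
    (hU : IsAsdimCover_s13 U r D n) : IsAsdimCover_s13 (⋃ i, (φ i '' ·) '' U) r D n := by
  obtain ⟨hcov, hdiam, hball⟩ := hU
  refine ⟨?_, ?_, fun x => ?_⟩
  · refine eq_univ_of_forall fun x => ?_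
    obtain ⟨i, y, rfl⟩ := hcover x
    obtain ⟨u, hu, hyu⟩ : y ∈ ⋃₀ U := hcov ▸ mem_univ y
    exact ⟨_, mem_iUnion.2 ⟨i, u, hu, rfl⟩, y, hyu, rfl⟩
  · simp only [mem_iUnion, mem_image]
    rintro _ ⟨i, u, hu, rfl⟩
    exact (hφ i).ediam_image u ▸ hdiam u hu
  · obtain ⟨i, y, rfl⟩ := hcover x
    refine (hball y).1.ncard_le_of_subset_image (f := (φ i '' ·)) ?_ (hball y).2
    simp only [mem_iUnion, mem_image]
    rintro _ ⟨⟨j, u, hu, rfl⟩, _, ⟨z, hzu, rfl⟩, hzy⟩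
    obtain rfl : j = i := hsep j i z y hzy
    refine ⟨u, ⟨hu, z, hzu, ?_⟩, rfl⟩
    rwa [mem_ball, ← (hφ j).dist_eq]

end IsAsdimCover_s13

theorem AsdimLE.of_isometry {X Y : Type*} [MetricSpace X] [MetricSpace Y] {f : X → Y}
    (hf : Isometry f) {n : ℕ} (h : AsdimLE Y n) : AsdimLE X n :=
  asdimLE_iff_exists_isAsdimCover.2 fun r hr =>
    let ⟨D, hD, _, hU⟩ := asdimLE_iff_exists_isAsdimCover.1 h r hr
    ⟨D, hD, _, hU.preimage_isometry hf⟩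

theorem QuotientGroup.mk_eq_mk_of_dist_le {G : Type*} [Group G] [MetricSpace G]
    (hinv : ∀ z x y : G, dist (z * x) (z * y) = dist x y) {r : ℝ} {x y : G} (hxy : dist x y ≤ r) :
    (x : G ⧸ Subgroup.closure (closedBall (1 : G) r)) = y := by
  refine QuotientGroup.eq.2 (Subgroup.subset_closure ?_)
  rwa [mem_closedBall, dist_comm, ← inv_mul_cancel x, hinv]

theorem asdimLE_of_forall_asdimLE_closure_closedBall {G : Type*} [Group G] [MetricSpace G]
    (hinv : ∀ z x y : G, dist (z * x) (z * y) = dist x y) {n : ℕ}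
    (h : ∀ r > (0 : ℝ), AsdimLE (Subgroup.closure (closedBall (1 : G) r)) n) :
    AsdimLE G n := by
  refine asdimLE_iff_exists_isAsdimCover.2 fun r hr => ?_
  set H := Subgroup.closure (closedBall (1 : G) r)
  obtain ⟨D, hD, U, hU⟩ := asdimLE_iff_exists_isAsdimCover.1 (h r hr) r hr
  have hφ (q : G ⧸ H) : Isometry fun h : H => q.out * h :=
    Isometry.of_dist_eq fun _ _ => hinv _ _ _
  have hcover (x : G) : ∃ (q : G ⧸ H) (h : H), q.out * h = x :=
    ⟨x, ⟨_, QuotientGroup.eq.1 (QuotientGroup.out_eq' (x : G ⧸ H))⟩, mul_inv_cancel_left _ _⟩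
  have hsep (q q' : G ⧸ H) (h h' : H) (hlt : dist (q.out * h) (q'.out * h') < r) : q = q' := by
    rw [← QuotientGroup.out_eq' q, ← QuotientGroup.out_eq' q',
      ← QuotientGroup.mk_mul_of_mem q.out h.2, ← QuotientGroup.mk_mul_of_mem q'.out h'.2]
    exact QuotientGroup.mk_eq_mk_of_dist_le hinv hlt.le
  exact ⟨D, hD, _, hU.iUnion_image_isometry hφ hcover hsep⟩

theorem asdim_group_iff_compactly_generated_subgroups (G : Type*) [Group G] [MetricSpace G]
    (hinv : ∀ z x y : G, dist (z * x) (z * y) = dist x y)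
    (hproper : ∀ (x : G) (R : ℝ), IsCompact (Metric.closedBall x R)) (n : ℕ) :
    AsdimLE G n ↔
      ∀ H : Subgroup G, (∃ K : Set G, IsCompact K ∧ K ⊆ (H : Set G) ∧ Subgroup.closure K = H) →
        AsdimLE ↥H n := by
  refine ⟨fun hG H _ => hG.of_isometry isometry_subtype_coe, fun h => ?_⟩
  refine asdimLE_of_forall_asdimLE_closure_closedBall hinv fun r _ => h _ ?_
  exact ⟨_, hproper 1 r, Subgroup.subset_closure, rfl⟩
end

section
/- Let X be a metric space and let A ⊆ X be a subset that is not small. Then there exists r > 0 such that the set X \ B(A,r) is not large, where B(A,r) = ⋃_{a∈A} B(a,r) is the open r-neighborhood of A. -/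
/-! If `L` is `s`-dense, every point outside the `s`-neighbourhood of `A` is within `s` of a
point of `L`, and that point cannot lie in `A`. So the complement of the `s`-neighbourhood of `A`
lies within `s` of `L \ A`; if that complement is large, so is `L \ A`. Hence, were every such
complement large, `A` would be small. -/

open Metric Set

theorem IsLarge.of_subset_thickening {X : Type*} [MetricSpace X] {M L : Set X}
    (hM : IsLarge M) {s : ℝ} (hs : 0 ≤ s) (hML : M ⊆ thickening s L) : IsLarge L := by
  obtain ⟨t, ht, hMt⟩ := hM
  refine ⟨t + s, by linarith, fun x => ?_⟩
  obtain ⟨z, hzM, hxz⟩ := hMt x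
  obtain ⟨y, hyL, hzy⟩ := mem_thickening_iff.mp (hML hzM)
  exact ⟨y, hyL, (dist_triangle x z y).trans_lt (add_lt_add hxz hzy)⟩

theorem compl_thickening_subset_thickening_diff {X : Type*} [MetricSpace X] {L : Set X}
    {s : ℝ} (hL : ∀ x : X, ∃ y ∈ L, dist x y < s) (A : Set X) :
    (thickening s A)ᶜ ⊆ thickening s (L \ A) := by
  intro z hz
  obtain ⟨y, hyL, hzy⟩ := hL z
  have hyA : y ∉ A := fun hyA => hz (mem_thickening_iff.mpr ⟨y, hyA, hzy⟩)
  exact mem_thickening_iff.mpr ⟨y, ⟨hyL, hyA⟩, hzy⟩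

theorem isSmall_of_forall_isLarge_compl_thickening {X : Type*} [MetricSpace X] {A : Set X}
    (hA : ∀ r > (0 : ℝ), IsLarge (thickening r A)ᶜ) : IsSmall A := by
  rintro L ⟨s, hs, hL⟩
  exact (hA s hs).of_subset_thickening hs.le (compl_thickening_subset_thickening_diff hL A)

theorem not_small_complement_neighborhood_not_large {X : Type*} [MetricSpace X]
    (A : Set X) (hA : ¬ IsSmall A) :
    ∃ r > (0 : ℝ), ¬ IsLarge ((⋃ a ∈ A, Metric.ball a r)ᶜ) := by
  simp_rw [← thickening_eq_biUnion_ball]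
  by_contra! h
  exact hA (isSmall_of_forall_isLarge_compl_thickening h)
end

section
/- Let n ≥ 1, let Δ = {x ∈ Fin (n+1) → ℝ : x(i) ≥ 0 for all i and Σ_i x(i) = 1} be the standard n-dimensional simplex in ℝ^{n+1} with the sup-norm, let b = (1/(n+1),…,1/(n+1)) be its barycenter, and for each i let St'(i) = {x ∈ Δ : x(i) = max_j x(j)} be the barycentric star of the i-th vertex. Then for every ε > 0, every point x ∈ Fin (n+1) → ℝ with Σ_i x(i) = 1 satisfying: for each i ≤ n there exists y ∈ St'(i) with ‖x − y‖_∞ < ε, satisfies ‖x − b‖_∞ < n·ε. -/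
/-!
A point `y` of the star of the `i`-th vertex has `y i ≥ 1/(n+1)`, since its maximal coordinate
is at least the average. Hence every coordinate of `x` exceeds `1/(n+1) - ε`, i.e. `z := x - b`
satisfies `z j > -ε` for all `j`. As `∑ j, z j = 0`, each `z i` is minus the sum of the `n` other
coordinates, hence `z i < n ε`; the lower bound `z i > -ε ≥ -n ε` is immediate.
-/

open Finset

section

variable {ι : Type*} [Fintype ι]

theorem one_div_card_le_of_sum_eq_one_of_forall_le {y : ι → ℝ} {i : ι}
    (hy : ∑ j, y j = 1) (hi : ∀ j, y j ≤ y i) : 1 / (Fintype.card ι : ℝ) ≤ y i := by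
  have hcard : (0 : ℝ) < Fintype.card ι := by
    exact_mod_cast Fintype.card_pos_iff.mpr ⟨i⟩
  have hsum : ∑ j, y j ≤ Fintype.card ι * y i := by
    simpa using sum_le_card_nsmul univ y (y i) fun j _ => hi j
  rw [div_le_iff₀ hcard]
  linarith

theorem one_div_card_sub_lt_of_norm_sub_lt {x y : ι → ℝ} {i : ι} {ε : ℝ}
    (hy : ∑ j, y j = 1) (hi : ∀ j, y j ≤ y i) (hxy : ‖x - y‖ < ε) :
    1 / (Fintype.card ι : ℝ) - ε < x i := by
  have hyi := one_div_card_le_of_sum_eq_one_of_forall_le hy hi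
  have hxyi : |x i - y i| < ε := (norm_le_pi_norm (x - y) i).trans_lt hxy
  linarith [(abs_lt.mp hxyi).1]

theorem abs_lt_of_sum_eq_zero_of_forall_neg_lt [Nontrivial ι] {z : ι → ℝ} {ε : ℝ}
    (hz : ∑ j, z j = 0) (hlt : ∀ j, -ε < z j) (i : ι) :
    |z i| < (Fintype.card ι - 1 : ℝ) * ε := by
  obtain ⟨k, hki⟩ := exists_ne i
  have hshift : z i + ε < ∑ j, (z j + ε) :=
    single_lt_sum (f := fun j => z j + ε) hki (mem_univ i) (mem_univ k)
      (by linarith [hlt k]) fun j _ _ => by linarith [hlt j]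
  have hsum : ∑ j, (z j + ε) = Fintype.card ι * ε := by
    simp [sum_add_distrib, hz]
  have hcard : (2 : ℝ) ≤ Fintype.card ι := by exact_mod_cast Fintype.one_lt_card
  have hε : 0 < ε :=
    pos_of_mul_pos_right (a := (Fintype.card ι : ℝ)) (by linarith [hlt i]) (by linarith)
  rw [abs_lt]
  constructor <;> nlinarith [hlt i]

end

theorem near_barycentric_stars_near_barycenter_general (n : ℕ) (hn : 1 ≤ n) (ε : ℝ)
    (x : Fin (n + 1) → ℝ) (hx : ∑ i, x i = 1)
    (h : ∀ i : Fin (n + 1), ∃ y : Fin (n + 1) → ℝ,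
      (∀ j, 0 ≤ y j) ∧ (∑ j, y j = 1) ∧ (∀ j, y j ≤ y i) ∧ ‖x - y‖ < ε) :
    ‖x - (fun _ => 1 / (n + 1 : ℝ))‖ < n * ε := by
  have : Nontrivial (Fin (n + 1)) := Fin.nontrivial_iff_two_le.mpr (by omega)
  set z := x - fun _ => 1 / (n + 1 : ℝ)
  have hz : ∑ j, z j = 0 := by
    simp only [z, Pi.sub_apply, sum_sub_distrib, hx, sum_const, card_univ, Fintype.card_fin,
      nsmul_eq_mul, Nat.cast_add_one]
    field_simp
    exact sub_self 1
  have hlt : ∀ j, -ε < z j := fun j => by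
    obtain ⟨y, -, hy, hj, hxy⟩ := h j
    have := one_div_card_sub_lt_of_norm_sub_lt hy hj hxy
    simp only [Fintype.card_fin, Nat.cast_add_one] at this
    simp only [z, Pi.sub_apply]
    linarith
  have hcoord : ∀ j, |z j| < n * ε := fun j => by
    simpa using abs_lt_of_sum_eq_zero_of_forall_neg_lt hz hlt j
  exact (pi_norm_lt_iff ((abs_nonneg _).trans_lt (hcoord 0))).mpr hcoord

theorem near_barycentric_stars_near_barycenter (n : ℕ) (hn : 1 ≤ n) (ε : ℝ) (hε : 0 < ε)
    (x : Fin (n + 1) → ℝ) (hx : ∑ i, x i = 1)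
    (h : ∀ i : Fin (n + 1), ∃ y : Fin (n + 1) → ℝ,
      (∀ j, 0 ≤ y j) ∧ (∑ j, y j = 1) ∧ (∀ j, y j ≤ y i) ∧ ‖x - y‖ < ε) :
    ‖x - (fun _ => 1 / (n + 1 : ℝ))‖ < n * ε :=
  near_barycentric_stars_near_barycenter_general n hn ε x hx h
end
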